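/- arXiv:1401.1887 — 12 statements merged into one kernel-verified Lean document; each statement's English description precedes it below -/
import Mathlib

section
/- Let p be an odd prime, m a positive integer, n = 2m, q = p^n, and let S = {z in F_q : z * z^{p^m} = 1}. Then every square in F_q^* can be written as y*z with y in F_{p^m}^* and z in S, and each such square admits exactly two such representations. -/
/-!
Let `σ` be an involutive automorphism of a field `K` of characteristic `≠ 2` and write
`N a = a * σ a`. If `x = y * z` with `σ y = y` and `N z = 1`, then `N x = y ^ 2`; for
`x = w ^ 2` also `N x = (N w) ^ 2`, so `y = ± N w` and `z = x / y`. Conversely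
`(N w, w / σ w)` is such a factorization, and so is its negative. For `K = 𝔽_{p^{2m}}`
take `σ` to be the `m`-th power of Frobenius.
-/

section Involution

variable {K : Type*} [Field K] (σ : K →+* K)

def fixedMulNormOneFactorizations (x : K) : Set (K × K) :=
  {yz | yz.1 ≠ 0 ∧ σ yz.1 = yz.1 ∧ yz.2 * σ yz.2 = 1 ∧ x = yz.1 * yz.2}

variable {σ}

theorem fixedMulNormOneFactorizations_sq (hσ : ∀ a, σ (σ a) = a) {w : K} (hw : w ≠ 0) :
    fixedMulNormOneFactorizations σ (w ^ 2) =
      {(w * σ w, w / σ w), (-(w * σ w), -(w / σ w))} := by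
  have hσw : σ w ≠ 0 := map_ne_zero σ |>.mpr hw
  ext ⟨y, z⟩
  simp only [fixedMulNormOneFactorizations, Set.mem_ofPred_eq, Set.mem_insert_iff,
    Set.mem_singleton_iff, Prod.mk.injEq]
  constructor
  · rintro ⟨hy, hσy, hz, hwyz⟩
    have hy_sq : y ^ 2 = (w * σ w) ^ 2 := by
      have := congrArg (fun a => a * σ a) hwyz
      simp only [map_mul, map_pow, hσy] at this
      linear_combination -this - y ^ 2 * hz
    have hz_eq : z = w ^ 2 / y := by field_simp; linear_combination -hwyz
    rcases sq_eq_sq_iff_eq_or_eq_neg.mp hy_sq with rfl | rfl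
    · exact .inl ⟨rfl, by rw [hz_eq]; field_simp⟩
    · exact .inr ⟨rfl, by rw [hz_eq]; field_simp⟩
  · rintro (⟨rfl, rfl⟩ | ⟨rfl, rfl⟩) <;>
      refine ⟨by simp [hw, hσw], by simp [hσ, mul_comm], ?_, by field_simp⟩ <;>
      simp only [map_neg, map_div₀, hσ] <;> field_simp

theorem ncard_fixedMulNormOneFactorizations_sq (hσ : ∀ a, σ (σ a) = a) (h2 : (2 : K) ≠ 0)
    {w : K} (hw : w ≠ 0) : (fixedMulNormOneFactorizations σ (w ^ 2)).ncard = 2 := by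
  rw [fixedMulNormOneFactorizations_sq hσ hw, Set.ncard_pair]
  have hN : w * σ w ≠ 0 := mul_ne_zero hw (map_ne_zero σ |>.mpr hw)
  intro h
  have h2N : 2 * (w * σ w) = 0 := by linear_combination congrArg Prod.fst h
  exact hN ((mul_eq_zero.mp h2N).resolve_left h2)

end Involution

theorem GaloisField.iterateFrobenius_iterateFrobenius (p m : ℕ) [Fact p.Prime] (hm : 0 < m)
    (a : GaloisField p (2 * m)) :
    iterateFrobenius _ p m (iterateFrobenius (GaloisField p (2 * m)) p m a) = a := by
  have : Fintype (GaloisField p (2 * m)) := Fintype.ofFinite _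
  have hcard : Fintype.card (GaloisField p (2 * m)) = p ^ (2 * m) := by
    rw [← Nat.card_eq_fintype_card, GaloisField.card p _ (by omega)]
  rw [← RingHom.comp_apply, ← iterateFrobenius_add, iterateFrobenius_def, ← two_mul, ← hcard,
    FiniteField.pow_card]

/-- for an odd prime `p`, `n = 2m`, every square in `F_{p^n}^*` can be
written as `y * z` with `y ∈ F_{p^m}^*` and `z ∈ S = {z : z * z^(p^m) = 1}`, and
each such square admits exactly two such representations. -/
theorem stmt_2 (p m : ℕ) [Fact p.Prime] (hp : Odd p) (hm : 0 < m)
    (x : GaloisField p (2 * m))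
    (hx : ∃ w : GaloisField p (2 * m), w ≠ 0 ∧ w ^ 2 = x) :
    Nat.card {yz : GaloisField p (2 * m) × GaloisField p (2 * m) //
      yz.1 ≠ 0 ∧ yz.1 ^ (p ^ m) = yz.1 ∧ yz.2 * yz.2 ^ (p ^ m) = 1 ∧
        x = yz.1 * yz.2} = 2 := by
  obtain ⟨w, hw, rfl⟩ := hx
  have h2 : (2 : GaloisField p (2 * m)) ≠ 0 := Ring.two_ne_zero <| by
    rw [ringChar.eq (GaloisField p (2 * m)) p]
    rintro rfl
    exact Nat.not_odd_iff_even.mpr even_two hp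
  have h := ncard_fixedMulNormOneFactorizations_sq
    (GaloisField.iterateFrobenius_iterateFrobenius p m hm) h2 hw
  rwa [← Nat.card_coe_set_eq] at h
end

section
/- Let p be a prime, m positive, n = 2m, and let d = s(p^m - 1) + 1 be a Niho exponent with gcd(d, p^n - 1) = 1. Then the inverse of d modulo p^n - 1 is also of Niho type; specifically, d^{-1} ≡ s'(p^m - 1) + 1 (mod p^n - 1) where s' ≡ s * (2s - 1)^{-1} (mod p^m + 1), with (2s-1)^{-1} the inverse of 2s - 1 modulo p^m + 1. -/
/- With `q = p^m`, `d - 1 = s(q-1)` and `d' - 1 = s'(q-1)` give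
`d d' - 1 = (q-1)(q+1)ss' - (q-1)((2s-1)s' - s)`, and `q+1` divides the second bracket. -/
theorem Int.niho_mul_modEq_one {q s s' : ℤ} (h : (2 * s - 1) * s' ≡ s [ZMOD q + 1]) :
    (s * (q - 1) + 1) * (s' * (q - 1) + 1) ≡ 1 [ZMOD q ^ 2 - 1] := by
  obtain ⟨k, hk⟩ := h.dvd
  exact Int.modEq_iff_dvd.2 ⟨-(s * s' + k), by linear_combination (1 - q) * hk⟩

theorem stmt_5_general (p m : ℕ) (s : ℤ)
    (s' : ℤ) (hs' : (2 * s - 1) * s' ≡ s [ZMOD ((p : ℤ) ^ m + 1)]) :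
    (s * ((p : ℤ) ^ m - 1) + 1) * (s' * ((p : ℤ) ^ m - 1) + 1) ≡ 1
      [ZMOD ((p : ℤ) ^ (2 * m) - 1)] := by
  rw [pow_mul']
  exact Int.niho_mul_modEq_one hs'

/-- if `d = s(p^m-1)+1` is a Niho exponent with `gcd(d, p^{2m}-1) = 1`,
then its inverse modulo `p^{2m}-1` is again of Niho type: for any `s'` with
`(2s-1)·s' ≡ s (mod p^m+1)` (i.e. `s' ≡ s·(2s-1)⁻¹`), the number `s'(p^m-1)+1`
is a multiplicative inverse of `d` modulo `p^{2m}-1`. -/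
theorem stmt_5 (p m : ℕ) [Fact p.Prime] (hm : 0 < m) (s : ℤ)
    (hd : Int.gcd (s * ((p : ℤ) ^ m - 1) + 1) ((p : ℤ) ^ (2 * m) - 1) = 1)
    (s' : ℤ) (hs' : (2 * s - 1) * s' ≡ s [ZMOD ((p : ℤ) ^ m + 1)]) :
    (s * ((p : ℤ) ^ m - 1) + 1) * (s' * ((p : ℤ) ^ m - 1) + 1) ≡ 1
      [ZMOD ((p : ℤ) ^ (2 * m) - 1)] :=
  stmt_5_general p m s s' hs'
end

section
/- Let m be a positive integer, n = 2m, and d = s(2^m - 1) + 1 a Niho exponent. Let cl(d) be the least positive integer k with 2^k * d ≡ d (mod 2^n - 1). Then cl(d) = m if s ≡ 2^{-1} (mod 2^m + 1), and cl(d) = n otherwise. -/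
/-!
With `d = s(2^m - 1) + 1` and `2^{2m} - 1 = (2^m - 1)(2^m + 1)` (coprime factors),
`2^k d ≡ d` splits into `2^m - 1 ∣ (2^k - 1) d` and `2^m + 1 ∣ (2^k - 1) d`. Since `d ≡ 1` modulo
`2^m - 1`, the first says `m ∣ k`. Since `2^m ≡ -1` modulo `2^m + 1`, we have `d ≡ 1 - 2s` there,
so `k = m` satisfies the second exactly when `2s ≡ 1`; otherwise the next multiple `k = 2m`
satisfies it trivially.
-/

theorem Nat.pow_sub_one_dvd_pow_sub_one_iff {a m k : ℕ} (ha : 1 < a) :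
    a ^ m - 1 ∣ a ^ k - 1 ↔ m ∣ k := by
  rw [← Nat.gcd_eq_left_iff_dvd, Nat.pow_sub_one_gcd_pow_sub_one, ← Nat.gcd_eq_left_iff_dvd]
  have h1 : ∀ j, 1 ≤ a ^ j := fun j => Nat.one_le_pow _ _ (by omega)
  constructor
  · intro h
    have := h1 (m.gcd k); have := h1 m
    exact Nat.pow_right_injective ha (show a ^ m.gcd k = a ^ m by omega)
  · intro h; rw [h]

theorem Nat.mul_modEq_self_iff_dvd {n a d : ℕ} (ha : 1 ≤ a) :
    a * d ≡ d [MOD n] ↔ n ∣ (a - 1) * d := by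
  rw [Nat.sub_one_mul, Nat.ModEq.comm, Nat.modEq_iff_dvd' (Nat.le_mul_of_pos_left d ha)]

theorem Nat.pow_two_mul_sub_one (a m : ℕ) : a ^ (2 * m) - 1 = (a ^ m - 1) * (a ^ m + 1) := by
  rw [mul_comm 2, pow_mul, ← one_pow 2, Nat.sq_sub_sq, one_pow, mul_comm]

theorem Nat.coprime_two_pow_sub_one_two_pow_add_one {m : ℕ} (hm : 0 < m) :
    Nat.Coprime (2 ^ m - 1) (2 ^ m + 1) := by
  have h2 : 2 ∣ 2 ^ m := dvd_pow_self 2 hm.ne'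
  have h1 : 1 ≤ 2 ^ m := Nat.one_le_two_pow
  have hB : 2 ^ m + 1 = 2 + (2 ^ m - 1) := by omega
  rw [hB, Nat.coprime_add_self_right, Nat.coprime_comm, Nat.Prime.coprime_iff_not_dvd Nat.prime_two]
  omega

theorem Nat.add_one_dvd_mul_sub_one_add_one_iff {n : ℕ} (hn : 1 ≤ n) (s : ℕ) :
    n + 1 ∣ s * (n - 1) + 1 ↔ 2 * s ≡ 1 [MOD n + 1] := by
  rw [Nat.modEq_iff_dvd, ← Int.natCast_dvd_natCast]
  push_cast [hn]
  have : (s : ℤ) * (n - 1) + 1 = s * (n + 1) + (1 - 2 * s) := by ring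
  rw [this, dvd_add_right (dvd_mul_left _ _)]

theorem two_pow_mul_niho_modEq_iff {m : ℕ} (hm : 0 < m) (s k : ℕ) :
    2 ^ k * (s * (2 ^ m - 1) + 1) ≡ s * (2 ^ m - 1) + 1 [MOD 2 ^ (2 * m) - 1] ↔
      m ∣ k ∧ 2 ^ m + 1 ∣ (2 ^ k - 1) * (s * (2 ^ m - 1) + 1) := by
  have hD : Nat.Coprime (2 ^ m - 1) (s * (2 ^ m - 1) + 1) :=
    Nat.coprime_mul_right_add_right _ _ _ |>.mpr (Nat.coprime_one_right _)
  rw [Nat.mul_modEq_self_iff_dvd Nat.one_le_two_pow, Nat.pow_two_mul_sub_one,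
    ← Nat.pow_sub_one_dvd_pow_sub_one_iff (k := k) one_lt_two, ← hD.dvd_mul_right]
  exact ⟨fun h => ⟨dvd_of_mul_right_dvd h, dvd_of_mul_left_dvd h⟩,
    fun ⟨hA, hB⟩ => (Nat.coprime_two_pow_sub_one_two_pow_add_one hm).mul_dvd_of_dvd_of_dvd hA hB⟩

/-- for the Niho exponent `d = s(2^m-1)+1`, the least positive `k`
with `2^k · d ≡ d (mod 2^{2m}-1)` (the 2-cyclotomic coset size `cl(d)`) equals `m`
when `s ≡ 2⁻¹ (mod 2^m+1)` (i.e. `2s ≡ 1`), and equals `n = 2m` otherwise. -/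
theorem stmt_6 (m s : ℕ) (hm : 0 < m) :
    (2 * s ≡ 1 [MOD 2 ^ m + 1] →
      IsLeast {k : ℕ | 0 < k ∧
        2 ^ k * (s * (2 ^ m - 1) + 1) ≡ s * (2 ^ m - 1) + 1 [MOD 2 ^ (2 * m) - 1]} m) ∧
    (¬ 2 * s ≡ 1 [MOD 2 ^ m + 1] →
      IsLeast {k : ℕ | 0 < k ∧
        2 ^ k * (s * (2 ^ m - 1) + 1) ≡ s * (2 ^ m - 1) + 1 [MOD 2 ^ (2 * m) - 1]}
        (2 * m)) := by
  simp only [two_pow_mul_niho_modEq_iff hm,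
    ← Nat.add_one_dvd_mul_sub_one_add_one_iff (Nat.one_le_two_pow (n := m))]
  refine ⟨fun hD => ⟨⟨hm, dvd_rfl, dvd_mul_of_dvd_right hD _⟩, ?_⟩, fun hD => ⟨?_, ?_⟩⟩
  · rintro k ⟨hk, hmk, -⟩
    exact Nat.le_of_dvd hk hmk
  · refine ⟨by omega, dvd_mul_left m 2, ?_⟩
    rw [Nat.pow_two_mul_sub_one]
    exact dvd_mul_of_dvd_left (dvd_mul_left _ _) _
  · rintro k ⟨hk, ⟨j, rfl⟩, hB⟩
    rcases j with _ | _ | j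
    · omega
    · simp only [zero_add, mul_one] at hB
      exact absurd ((Nat.coprime_two_pow_sub_one_two_pow_add_one hm).symm.dvd_mul_left.mp hB) hD
    · nlinarith
end

section
/- Let m be a positive integer, n = 2m, q = 2^n, and let d_2 = s_2(2^m - 1) + 1 be a Niho exponent. Set l = gcd(2 s_2 - 1, 2^m + 1). Then the number of pairs (x, y) in F_q × F_q satisfying x^{2^m+1} + y^{2^m+1} = 0 and x^{d_2} + y^{d_2} = 0 equals (2^n - 1) * l + 1. -/
/-!
In characteristic two the two equations read `x ^ a = y ^ a` and `x ^ d = y ^ d`. The pair `(0, 0)`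
is the only solution with `y = 0`; for `y ≠ 0` they say that `x / y` is a root of unity of order
dividing `gcd a d`. With `a = 2^m + 1` and `d = s(2^m - 1) + 1` one has `d + (2s - 1) = s a`, so
`gcd a d = gcd (2s - 1) a`, which divides `q - 1`; hence each `y ≠ 0` has exactly that many partners.
-/

open Finset Polynomial

theorem Nat.gcd_eq_gcd_of_add_eq_mul {a d r s : ℕ} (h : d + r = s * a) :
    Nat.gcd a d = Nat.gcd r a := by
  have hsa : ∀ {k}, k ∣ a → k ∣ d + r := fun hk => h ▸ dvd_mul_of_dvd_right hk s
  refine Nat.dvd_antisymm (Nat.dvd_gcd ?_ (Nat.gcd_dvd_left a d))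
    (Nat.dvd_gcd (Nat.gcd_dvd_right r a) ?_)
  · exact (Nat.dvd_add_right (Nat.gcd_dvd_right a d)).mp (hsa (Nat.gcd_dvd_left a d))
  · exact (Nat.dvd_add_left (Nat.gcd_dvd_left r a)).mp (hsa (Nat.gcd_dvd_right r a))

theorem pow_eq_pow_and_pow_eq_pow_iff_pow_gcd {G₀ : Type*} [CommGroupWithZero G₀]
    {a : ℕ} (ha : a ≠ 0) (d : ℕ) (x y : G₀) :
    x ^ a = y ^ a ∧ x ^ d = y ^ d ↔ x ^ Nat.gcd a d = y ^ Nat.gcd a d := by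
  rcases eq_or_ne y 0 with rfl | hy
  · simp only [zero_pow ha, zero_pow (Nat.gcd_ne_zero_left ha), pow_eq_zero_iff ha,
      pow_eq_zero_iff (Nat.gcd_ne_zero_left ha), and_iff_left_iff_imp]
    rintro rfl
    rfl
  · simp only [← div_eq_one_iff_eq (pow_ne_zero _ hy), ← div_pow,
      ← orderOf_dvd_iff_pow_eq_one, Nat.dvd_gcd_iff]

section FiniteField

variable {K : Type*} [Field K] [Fintype K]

theorem FiniteField.exists_isPrimitiveRoot_of_dvd {n : ℕ} (hn : n ∣ Fintype.card K - 1) :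
    ∃ ζ : K, IsPrimitiveRoot ζ n := by
  classical
  obtain ⟨g, hg⟩ := IsCyclic.exists_ofOrder_eq_natCard (α := Kˣ)
  rw [Nat.card_eq_fintype_card, Fintype.card_units] at hg
  have hq : 0 < Fintype.card K - 1 := Nat.sub_pos_of_lt Fintype.one_lt_card
  have hg' : IsPrimitiveRoot (g : K) (Fintype.card K - 1) :=
    IsPrimitiveRoot.coe_units_iff.mpr (hg ▸ IsPrimitiveRoot.orderOf g)
  refine ⟨_, Nat.div_div_self hn hq.ne' ▸ hg'.pow_of_dvd ?_ (Nat.div_dvd_of_dvd hn)⟩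
  exact (Nat.div_pos (Nat.le_of_dvd hq hn) (Nat.pos_of_dvd_of_pos hn hq)).ne'

theorem FiniteField.card_pow_eq_pow {n : ℕ} (hn : n ∣ Fintype.card K - 1) {x : K} (hx : x ≠ 0) :
    Nat.card {y : K // x ^ n = y ^ n} = n := by
  classical
  obtain ⟨ζ, hζ⟩ := FiniteField.exists_isPrimitiveRoot_of_dvd hn
  have hn0 : 0 < n := Nat.pos_of_dvd_of_pos hn (Nat.sub_pos_of_lt Fintype.one_lt_card)
  have hfibre : {y : K | x ^ n = y ^ n} = (nthRootsFinset n (x ^ n) : Set K) := by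
    ext y; simp [mem_nthRootsFinset hn0, eq_comm]
  rw [← Set.coe_ofPred, hfibre, Nat.card_coe_set_eq, Set.ncard_coe_finset, nthRootsFinset_def,
    Multiset.toFinset_card_of_nodup (hζ.nthRoots_nodup (pow_ne_zero n hx)), hζ.card_nthRoots,
    if_pos ⟨x, rfl⟩]

theorem FiniteField.card_pow_eq_pow_pairs {n : ℕ} (hn : n ∣ Fintype.card K - 1) :
    Nat.card {p : K × K // p.1 ^ n = p.2 ^ n} = (Fintype.card K - 1) * n + 1 := by
  classical
  have hn0 : n ≠ 0 := (Nat.pos_of_dvd_of_pos hn (Nat.sub_pos_of_lt Fintype.one_lt_card)).ne'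
  have hzero : Nat.card {y : K // (0 : K) ^ n = y ^ n} = 1 := by
    simp only [zero_pow hn0, eq_comm (a := (0 : K)), pow_eq_zero_iff hn0]
    exact Nat.card_unique
  rw [Nat.card_congr (Equiv.subtypeProdEquivSigmaSubtype fun x y : K => x ^ n = y ^ n),
    Nat.card_sigma, ← Finset.sum_erase_add _ _ (mem_univ 0), hzero,
    Finset.sum_congr rfl fun x hx => FiniteField.card_pow_eq_pow hn (ne_of_mem_erase hx),
    sum_const, card_erase_of_mem (mem_univ 0), card_univ, smul_eq_mul]

end FiniteField

/-- Lemma "N2": with `q = 2^{2m}`, `d₂ = s₂(2^m-1)+1` a Niho exponent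
and `l = gcd(2s₂-1, 2^m+1)`, the number of pairs `(x,y) ∈ F_q²` with
`x^{2^m+1} + y^{2^m+1} = 0` and `x^{d₂} + y^{d₂} = 0` is `(2^{2m}-1)·l + 1`. -/
theorem stmt_7 (m s2 : ℕ) (hm : 0 < m) (hs2 : 1 ≤ s2) :
    Nat.card {xy : GaloisField 2 (2 * m) × GaloisField 2 (2 * m) //
      xy.1 ^ (2 ^ m + 1) + xy.2 ^ (2 ^ m + 1) = 0 ∧
      xy.1 ^ (s2 * (2 ^ m - 1) + 1) + xy.2 ^ (s2 * (2 ^ m - 1) + 1) = 0} =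
    (2 ^ (2 * m) - 1) * Nat.gcd (2 * s2 - 1) (2 ^ m + 1) + 1 := by
  let F := GaloisField 2 (2 * m)
  let _ : Fintype F := Fintype.ofFinite F
  have hcard : Fintype.card F = 2 ^ (2 * m) := by
    rw [← Nat.card_eq_fintype_card, GaloisField.card 2 (2 * m) (by omega)]
  have hgcd : Nat.gcd (2 ^ m + 1) (s2 * (2 ^ m - 1) + 1) = Nat.gcd (2 * s2 - 1) (2 ^ m + 1) := by
    refine Nat.gcd_eq_gcd_of_add_eq_mul (s := s2) ?_
    have : 1 ≤ 2 ^ m := Nat.one_le_two_pow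
    zify [this, show 1 ≤ 2 * s2 by omega]
    ring
  have hdvd : Nat.gcd (2 ^ m + 1) (s2 * (2 ^ m - 1) + 1) ∣ Fintype.card F - 1 :=
    hcard ▸ (Nat.gcd_dvd_left _ _).trans
      ⟨2 ^ m - 1, by rw [mul_comm 2 m, pow_mul, ← Nat.sq_sub_sq, one_pow]⟩
  rw [← hcard, ← hgcd, ← FiniteField.card_pow_eq_pow_pairs hdvd]
  refine Nat.card_congr (Equiv.subtypeEquivRight fun p => ?_)
  rw [CharTwo.add_eq_zero, CharTwo.add_eq_zero]
  exact pow_eq_pow_and_pow_eq_pow_iff_pow_gcd (by positivity) _ _ _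
end

section
/- Let m be a positive integer, n = 2m, q = 2^n. Let 1 ≤ k ≤ m, let t ≥ 1 be odd, and set d_1 = s_1(2^m-1)+1, d_2 = s_2(2^m-1)+1 with s_1 = 2^{k-1} t - (t-1)/2 and s_2 = 2^{k-1} t + (t+1)/2. Let l = gcd(t, 2^m + 1). Then the number of pairs (x,y) in F_q^2 with x^{d_1} + y^{d_1} = 0 and x^{d_2} + y^{d_2} = 0 equals (2^n - 1) l + 1. -/
/-!
In characteristic two, `x ^ d + y ^ d = 0` means `x ^ d = y ^ d`. Apart from `(0, 0)`, the
solutions are the pairs `(z * y, y)` with `y` a unit and `z ^ d₁ = z ^ d₂ = 1`; since `F_qˣ` is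
cyclic of order `q - 1`, there are `gcd (q - 1, d₁, d₂)` such `z`. Finally, with
`M = 2 ^ m - 1` and `E = 2 ^ m + 1`, we have `q - 1 = M * E`, `d₂ = d₁ + t * M`,
`d₁ ≡ 1 [MOD M]` and `2 * d₁ = (2 * 2 ^ (k - 1) - 1) * t * M + E`, which pins that gcd down
to `gcd (t, E)`.
-/

section CommGroupWithZero

variable {G₀ : Type*} [CommGroupWithZero G₀]

theorem card_pairs_pow_eq_pow [Finite G₀] {d e : ℕ} (hd : d ≠ 0) :
    Nat.card {xy : G₀ × G₀ // xy.1 ^ d = xy.2 ^ d ∧ xy.1 ^ e = xy.2 ^ e} =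
      Nat.card G₀ˣ * Nat.card {z : G₀ˣ // z ^ d = 1 ∧ z ^ e = 1} + 1 := by
  let f : Option ({z : G₀ˣ // z ^ d = 1 ∧ z ^ e = 1} × G₀ˣ) →
      {xy : G₀ × G₀ // xy.1 ^ d = xy.2 ^ d ∧ xy.1 ^ e = xy.2 ^ e}
    | none => ⟨(0, 0), rfl, rfl⟩
    | some (z, y) => ⟨(((z * y : G₀ˣ) : G₀), y), by
        simp only [Units.val_mul, mul_pow, ← Units.val_pow_eq_pow_val, z.2.1, z.2.2,
          Units.val_one, one_mul, and_self]⟩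
  have hf : f.Bijective := by
    constructor
    · rintro (_ | ⟨z, y⟩) (_ | ⟨z', y'⟩) h
      · rfl
      · exact absurd (congrArg (fun s => s.1.2) h).symm y'.ne_zero
      · exact absurd (congrArg (fun s => s.1.2) h) y.ne_zero
      · obtain rfl : y = y' := Units.ext (congrArg (fun s => s.1.2) h)
        obtain rfl : z = z' :=
          Subtype.ext (mul_left_injective y (Units.ext (congrArg (fun s => s.1.1) h)))
        rfl
    · rintro ⟨⟨x, y⟩, hxd, hxe⟩
      dsimp only at hxd hxe
      by_cases hy : y = 0
      · subst hy
        obtain rfl : x = 0 := (pow_eq_zero_iff hd).mp (hxd.trans (zero_pow hd))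
        exact ⟨none, rfl⟩
      have hx : x ≠ 0 := by
        rintro rfl
        exact hy ((pow_eq_zero_iff hd).mp ((zero_pow hd).symm.trans hxd).symm)
      have hroot : ∀ n, x ^ n = y ^ n → (Units.mk0 x hx / Units.mk0 y hy) ^ n = 1 := by
        intro n hn
        rw [div_pow, div_eq_one]
        exact Units.ext (by simpa using hn)
      refine ⟨some (⟨_, hroot d hxd, hroot e hxe⟩, Units.mk0 y hy), ?_⟩
      simp [f, div_mul_cancel₀ x hy]
  rw [← Nat.card_congr (Equiv.ofBijective f hf), Finite.card_option, Nat.card_prod, mul_comm]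

end CommGroupWithZero

theorem IsCyclic.card_pow_eq_one_and_pow_eq_one {G : Type*} [CommGroup G] [IsCyclic G]
    [Finite G] (d e : ℕ) :
    Nat.card {z : G // z ^ d = 1 ∧ z ^ e = 1} = (Nat.card G).gcd (d.gcd e) := by
  rw [← IsCyclic.card_powMonoidHom_ker]
  refine Nat.card_congr (Equiv.subtypeEquivRight fun z => ?_)
  rw [MonoidHom.mem_ker, powMonoidHom_apply, ← orderOf_dvd_iff_pow_eq_one,
    ← orderOf_dvd_iff_pow_eq_one, ← orderOf_dvd_iff_pow_eq_one, Nat.dvd_gcd_iff]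

theorem gcd_mul_gcd_add_mul_eq_gcd {d t M E c : ℕ} (hdM : d.Coprime M) (hE : Odd E)
    (h2d : 2 * d = c * t * M + E) :
    (M * E).gcd (d.gcd (d + t * M)) = t.gcd E := by
  rw [Nat.gcd_self_add_right]
  apply Nat.dvd_antisymm
  · have hg : ((M * E).gcd (d.gcd (t * M))).Coprime M :=
      hdM.coprime_dvd_left ((Nat.gcd_dvd_right _ _).trans (Nat.gcd_dvd_left _ _))
    exact Nat.dvd_gcd
      (hg.dvd_of_dvd_mul_right ((Nat.gcd_dvd_right _ _).trans (Nat.gcd_dvd_right _ _)))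
      (hg.dvd_of_dvd_mul_left (Nat.gcd_dvd_left _ _))
  · have ht := Nat.gcd_dvd_left t E
    have hE' := Nat.gcd_dvd_right t E
    have hd : t.gcd E ∣ d := by
      have h2 : (t.gcd E).Coprime 2 :=
        Nat.coprime_two_right.mpr (hE.of_dvd_nat hE')
      refine h2.dvd_of_dvd_mul_left ?_
      rw [h2d]
      exact dvd_add ((ht.mul_left c).mul_right M) hE'
    exact Nat.dvd_gcd (hE'.mul_left M) (Nat.dvd_gcd hd (ht.mul_right M))

theorem gcd_exponents_eq_gcd_two_pow_add_one (m k t : ℕ) (hm : 0 < m) (ht : Odd t) :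
    (2 ^ (2 * m) - 1).gcd (((2 ^ (k - 1) * t - (t - 1) / 2) * (2 ^ m - 1) + 1).gcd
      ((2 ^ (k - 1) * t + (t + 1) / 2) * (2 ^ m - 1) + 1)) = t.gcd (2 ^ m + 1) := by
  obtain ⟨u, rfl⟩ := ht
  obtain ⟨Q, hQ⟩ : ∃ Q, 2 ^ (k - 1) = Q + 1 :=
    ⟨_, (Nat.succ_pred_eq_of_pos (by positivity)).symm⟩
  obtain ⟨M, hM⟩ : ∃ M, 2 ^ m = M + 1 := ⟨_, (Nat.succ_pred_eq_of_pos (by positivity)).symm⟩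
  have hE : Odd (M + 2) := by
    obtain ⟨r, hr⟩ : Even (M + 1) := hM ▸ Nat.even_pow.mpr ⟨even_two, hm.ne'⟩
    exact ⟨r, by omega⟩
  have hs₁ : (Q + 1) * (2 * u + 1) - (2 * u + 1 - 1) / 2 = Q * (2 * u + 1) + u + 1 := by
    rw [show (2 * u + 1 - 1) / 2 = u by omega]
    ring_nf
    omega
  have hq : 2 ^ (2 * m) - 1 = M * (M + 2) := by
    rw [pow_mul', hM]
    ring_nf
    omega
  rw [hq, hQ, hM, hs₁, Nat.add_sub_cancel, show (2 * u + 1 + 1) / 2 = u + 1 by omega]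
  convert gcd_mul_gcd_add_mul_eq_gcd (c := 2 * Q + 1) ?_ hE ?_ using 3
  · ring
  · simp only [Nat.coprime_mul_right_add_left, Nat.coprime_one_left_eq_true]
  · ring

theorem stmt_8_general (m k t : ℕ) (hm : 0 < m) (ht : Odd t) :
    Nat.card {xy : GaloisField 2 (2 * m) × GaloisField 2 (2 * m) //
      xy.1 ^ ((2 ^ (k - 1) * t - (t - 1) / 2) * (2 ^ m - 1) + 1) +
        xy.2 ^ ((2 ^ (k - 1) * t - (t - 1) / 2) * (2 ^ m - 1) + 1) = 0 ∧
      xy.1 ^ ((2 ^ (k - 1) * t + (t + 1) / 2) * (2 ^ m - 1) + 1) +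
        xy.2 ^ ((2 ^ (k - 1) * t + (t + 1) / 2) * (2 ^ m - 1) + 1) = 0} =
    (2 ^ (2 * m) - 1) * Nat.gcd t (2 ^ m + 1) + 1 := by
  simp_rw [CharTwo.add_eq_zero]
  rw [card_pairs_pow_eq_pow (Nat.succ_ne_zero _), IsCyclic.card_pow_eq_one_and_pow_eq_one,
    Nat.card_units, GaloisField.card 2 (2 * m) (by omega),
    gcd_exponents_eq_gcd_two_pow_add_one m k t hm ht]

/-- with `q = 2^{2m}`, `1 ≤ k ≤ m`, `t ≥ 1` odd,
`s₁ = 2^{k-1}t - (t-1)/2`, `s₂ = 2^{k-1}t + (t+1)/2`, `dᵢ = sᵢ(2^m-1)+1` and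
`l = gcd(t, 2^m+1)`, the number of pairs `(x,y) ∈ F_q²` with
`x^{d₁}+y^{d₁} = 0` and `x^{d₂}+y^{d₂} = 0` is `(2^{2m}-1)·l + 1`. -/
theorem stmt_8 (m k t : ℕ) (hm : 0 < m) (hk : 1 ≤ k) (hkm : k ≤ m)
    (ht : Odd t) (ht1 : 1 ≤ t) :
    Nat.card {xy : GaloisField 2 (2 * m) × GaloisField 2 (2 * m) //
      xy.1 ^ ((2 ^ (k - 1) * t - (t - 1) / 2) * (2 ^ m - 1) + 1) +
        xy.2 ^ ((2 ^ (k - 1) * t - (t - 1) / 2) * (2 ^ m - 1) + 1) = 0 ∧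
      xy.1 ^ ((2 ^ (k - 1) * t + (t + 1) / 2) * (2 ^ m - 1) + 1) +
        xy.2 ^ ((2 ^ (k - 1) * t + (t + 1) / 2) * (2 ^ m - 1) + 1) = 0} =
    (2 ^ (2 * m) - 1) * Nat.gcd t (2 ^ m + 1) + 1 :=
  stmt_8_general m k t hm ht
end

section
/- Let n, r be positive integers and r_0 = gcd(r, n). For any a, b, c in F_{2^n}, the equation x^{2^r + 1} + a x^{2^r} + b x + c = 0 has either 0, 1, 2, or 2^{r_0} + 1 solutions x in F_{2^n}. -/
/-!
If `x₀` is a root, the substitution `x = x₀ + z⁻¹` puts the other roots in bijection with the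
solutions of `β z^q + α z = -1`, where `q = p^r`, `α = x₀ + a` and `β = x₀^q + b`. The left side
is additive in `z`, so this set is empty or a coset of the kernel. A nonzero `w` lies in the
kernel iff `w^(q-1) = -α/β`, an equation in the cyclic group `Fˣ` whose solution set is empty
or a coset of the `(q-1)`-th roots of unity, of which there are `gcd(q - 1, #F - 1)`. Finally
`gcd(2^r - 1, 2^n - 1) = 2^gcd(r, n) - 1`.
-/

open Set

namespace MonoidHom

variable {G H : Type*} [Group G] [Finite G] [Group H]

@[to_additive]
theorem ncard_preimage_singleton_mem (f : G →* H) (y : H) :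
    (f ⁻¹' {y}).ncard ∈ ({0, (f ⁻¹' {1}).ncard} : Set ℕ) := by
  classical
  have := Fintype.ofFinite G
  rw [mem_insert_iff, mem_singleton_iff, ncard_eq_zero]
  by_cases hy : y ∈ Set.range f
  · right
    simp only [ncard_eq_toFinset_card']
    convert card_fiber_eq_of_mem_range f hy ⟨1, map_one f⟩ using 2 <;> ext <;> simp
  · exact .inl (preimage_singleton_eq_empty.mpr hy)

end MonoidHom

section Field

variable {F : Type*} [Field F]

theorem setOf_mul_pow_add_mul_eq_zero {k : ℕ} (hk : 1 < k) {α β : F} (hβ : β ≠ 0) :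
    {w : F | β * w ^ k + α * w = 0} = insert 0 {w | w ^ (k - 1) = -(α / β)} := by
  obtain ⟨j, rfl⟩ : ∃ j, k = j + 1 := ⟨k - 1, by omega⟩
  ext w
  rcases eq_or_ne w 0 with rfl | hw
  · simp [zero_pow (by omega : j + 1 ≠ 0)]
  · have : β * w ^ (j + 1) + α * w = β * (w ^ j + α / β) * w := by field_simp; ring
    simp [this, hw, hβ, eq_neg_iff_add_eq_zero]

variable [Finite F]

theorem FiniteField.ncard_setOf_pow_eq_mem {k : ℕ} (hk : k ≠ 0) {γ : F} (hγ : γ ≠ 0) :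
    {w : F | w ^ k = γ}.ncard ∈ ({0, (Nat.card F - 1).gcd k} : Set ℕ) := by
  have hunits : {w : F | w ^ k = γ} = Units.val '' (powMonoidHom k ⁻¹' {Units.mk0 γ hγ}) := by
    ext w
    refine ⟨fun hw ↦ ?_, ?_⟩
    · have hw0 : w ≠ 0 := by rintro rfl; exact hγ (by simpa [zero_pow hk] using hw.symm)
      exact ⟨Units.mk0 w hw0, Units.ext (by simpa using hw), rfl⟩
    · rintro ⟨u, hu, rfl⟩
      simpa [Units.ext_iff] using hu
  have hker : (powMonoidHom k ⁻¹' {1} : Set Fˣ).ncard = (Nat.card F - 1).gcd k := by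
    rw [← Nat.card_units, ← IsCyclic.card_powMonoidHom_ker, ← Nat.card_coe_set_eq]
    rfl
  rw [hunits, ncard_image_of_injective _ Units.val_injective, ← hker]
  exact MonoidHom.ncard_preimage_singleton_mem _ _

theorem ncard_setOf_mul_pow_add_mul_eq_zero_mem {k : ℕ} (hk : 1 < k) {α β : F}
    (hαβ : α ≠ 0 ∨ β ≠ 0) :
    {w : F | β * w ^ k + α * w = 0}.ncard ∈ ({1, (Nat.card F - 1).gcd (k - 1) + 1} : Set ℕ) := by
  have hk' : k - 1 ≠ 0 := by omega
  rcases eq_or_ne β 0 with rfl | hβ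
  · simp [hαβ.resolve_right (not_not.2 rfl)]
  rw [setOf_mul_pow_add_mul_eq_zero hk hβ]
  rcases eq_or_ne α 0 with rfl | hα
  · simp [hk']
  have h0 : (0 : F) ∉ {w | w ^ (k - 1) = -(α / β)} := by
    simp [zero_pow hk', eq_comm, hα, hβ]
  have hcount := FiniteField.ncard_setOf_pow_eq_mem hk' (neg_ne_zero.2 (div_ne_zero hα hβ))
  rw [ncard_insert_of_notMem h0]
  simp only [mem_insert_iff, mem_singleton_iff] at hcount ⊢
  omega

variable {p : ℕ} [Fact p.Prime] [CharP F p]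

theorem ncard_setOf_mul_pow_char_pow_add_mul_eq_mem {r : ℕ} (hr : 0 < r) (α β : F) {t : F}
    (ht : t ≠ 0) :
    {z : F | β * z ^ p ^ r + α * z = t}.ncard ∈
      ({0, 1, (Nat.card F - 1).gcd (p ^ r - 1) + 1} : Set ℕ) := by
  by_cases hαβ : α = 0 ∧ β = 0
  · simp [hαβ, ht.symm]
  let L : F →+ F := AddMonoidHom.mk' (fun z ↦ β * z ^ p ^ r + α * z) fun x y ↦ by
    simp only [add_pow_char_pow]
    ring
  have hfiber : {z : F | β * z ^ p ^ r + α * z = t}.ncard ∈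
      ({0, {w : F | β * w ^ p ^ r + α * w = 0}.ncard} : Set ℕ) :=
    L.ncard_preimage_singleton_mem t
  have hker := ncard_setOf_mul_pow_add_mul_eq_zero_mem
    (Nat.one_lt_pow hr.ne' (Fact.out : p.Prime).one_lt) (not_and_or.1 hαβ)
  simp only [mem_insert_iff, mem_singleton_iff] at hfiber hker ⊢
  omega

theorem ncard_roots_eq_ncard_add_one (r : ℕ) {a b c x₀ : F}
    (hx₀ : x₀ ^ (p ^ r + 1) + a * x₀ ^ p ^ r + b * x₀ + c = 0) :
    {x : F | x ^ (p ^ r + 1) + a * x ^ p ^ r + b * x + c = 0}.ncard =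
      {z : F | (x₀ ^ p ^ r + b) * z ^ p ^ r + (x₀ + a) * z = -1}.ncard + 1 := by
  set q := p ^ r
  set S := {x : F | x ^ (q + 1) + a * x ^ q + b * x + c = 0}
  set T := {z : F | (x₀ ^ q + b) * z ^ q + (x₀ + a) * z = -1}
  have hq : q ≠ 0 := pow_ne_zero r (Fact.out : p.Prime).ne_zero
  have hshift (y : F) (hy : y ≠ 0) : x₀ + y ∈ S ↔ y⁻¹ ∈ T := by
    have h1 : y ^ q * y⁻¹ ^ q = 1 := by rw [← mul_pow, mul_inv_cancel₀ hy, one_pow]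
    have h2 : y * y⁻¹ = 1 := mul_inv_cancel₀ hy
    have : (x₀ + y) ^ (q + 1) + a * (x₀ + y) ^ q + b * (x₀ + y) + c =
        y ^ (q + 1) * ((x₀ ^ q + b) * y⁻¹ ^ q + (x₀ + a) * y⁻¹ + 1) := by
      rw [pow_succ, add_pow_char_pow]
      linear_combination hx₀ - (x₀ ^ q + b) * y * h1 - (x₀ + a) * y ^ q * h2
    simp [S, T, this, hy, eq_neg_iff_add_eq_zero]
  have hT0 : (0 : F) ∉ T := by simp [T, zero_pow hq]
  have himage : S \ {x₀} = (fun z ↦ x₀ + z⁻¹) '' T := by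
    ext x
    constructor
    · rintro ⟨hxS, hxx₀⟩
      refine ⟨(x - x₀)⁻¹, ?_, by simp⟩
      rw [← hshift _ (sub_ne_zero.2 hxx₀)]
      simpa using hxS
    · rintro ⟨z, hzT, rfl⟩
      have hz : z ≠ 0 := ne_of_mem_of_not_mem hzT hT0
      exact ⟨(hshift _ (inv_ne_zero hz)).2 (by simpa using hzT), by simpa using hz⟩
  have hinj : Function.Injective fun z : F ↦ x₀ + z⁻¹ := (add_right_injective x₀).comp inv_injective
  rw [← ncard_sdiff_singleton_add_one (a := x₀) hx₀, himage, ncard_image_of_injective _ hinj]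

theorem ncard_roots_mem {r : ℕ} (hr : 0 < r) (a b c : F) :
    {x : F | x ^ (p ^ r + 1) + a * x ^ p ^ r + b * x + c = 0}.ncard ∈
      ({0, 1, 2, (Nat.card F - 1).gcd (p ^ r - 1) + 2} : Set ℕ) := by
  rcases eq_empty_or_nonempty {x : F | x ^ (p ^ r + 1) + a * x ^ p ^ r + b * x + c = 0}
    with hempty | ⟨x₀, hx₀⟩
  · simp [hempty]
  rw [ncard_roots_eq_ncard_add_one r hx₀]
  have := ncard_setOf_mul_pow_char_pow_add_mul_eq_mem hr (x₀ + a) (x₀ ^ p ^ r + b)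
    (neg_ne_zero.2 one_ne_zero)
  simp only [mem_insert_iff, mem_singleton_iff] at this ⊢
  omega

end Field

/-- Dobbertin et al.: for `a, b, c ∈ F_{2^n}` the equation
`x^{2^r+1} + a x^{2^r} + b x + c = 0` has `0`, `1`, `2` or `2^{gcd(r,n)}+1`
solutions in `F_{2^n}`. -/
theorem stmt_10 (n r : ℕ) (hn : 0 < n) (hr : 0 < r) (a b c : GaloisField 2 n) :
    Nat.card {x : GaloisField 2 n //
        x ^ (2 ^ r + 1) + a * x ^ (2 ^ r) + b * x + c = 0} ∈
      ({0, 1, 2, 2 ^ Nat.gcd r n + 1} : Set ℕ) := by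
  have hcount := ncard_roots_mem (p := 2) hr a b c
  rw [GaloisField.card 2 n hn.ne', Nat.pow_sub_one_gcd_pow_sub_one, Nat.gcd_comm] at hcount
  have hsucc : 2 ^ Nat.gcd r n - 1 + 2 = 2 ^ Nat.gcd r n + 1 := by
    have := Nat.one_le_two_pow (n := Nat.gcd r n)
    omega
  rwa [hsucc] at hcount
end

section
/- Let m be a positive integer with m ≡ -1 (mod k) for a positive integer k. Then gcd(2^k - 1, 2^m + 1) = 1 if k is odd, and gcd(2^k - 1, 2^m + 1) = 3 if k is even. -/
/-! Since `k ∣ m + 1`, a common divisor of `2 ^ k - 1` and `2 ^ m + 1` divides both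
`2 ^ (m + 1) - 1` and `2 * (2 ^ m + 1)`, hence their difference `3`. As `2 ≡ -1 (mod 3)`,
`3 ∣ 2 ^ k - 1` exactly when `k` is even, and then `m` is odd, so also `3 ∣ 2 ^ m + 1`. -/

theorem Nat.gcd_pow_sub_one_pow_add_one_dvd {a k m : ℕ} (ha : 0 < a) (h : k ∣ m + 1) :
    Nat.gcd (a ^ k - 1) (a ^ m + 1) ∣ a + 1 := by
  set d := Nat.gcd (a ^ k - 1) (a ^ m + 1)
  have hsub : d ∣ a ^ (m + 1) - 1 := by
    obtain ⟨t, ht⟩ := h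
    refine (Nat.gcd_dvd_left _ _).trans ?_
    simpa [ht, pow_mul] using Nat.sub_dvd_pow_sub_pow (a ^ k) 1 t
  have hadd : d ∣ a ^ (m + 1) + a := by
    rw [show a ^ (m + 1) + a = a * (a ^ m + 1) by ring]
    exact (Nat.gcd_dvd_right _ _).mul_left a
  have hpos : 1 ≤ a ^ (m + 1) := Nat.one_le_pow _ _ ha
  simpa [show a ^ (m + 1) + a - (a ^ (m + 1) - 1) = a + 1 by omega] using
    Nat.dvd_sub hadd hsub

theorem Nat.two_pow_mod_three (n : ℕ) : 2 ^ n % 3 = if Even n then 1 else 2 := by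
  obtain ⟨s, rfl | rfl⟩ := Nat.even_or_odd' n
  · simp [pow_mul, Nat.pow_mod]
  · simp [pow_succ, pow_mul, Nat.mul_mod, Nat.pow_mod, Nat.not_even_bit1]

theorem Nat.three_dvd_two_pow_sub_one_iff (n : ℕ) : 3 ∣ 2 ^ n - 1 ↔ Even n := by
  have hpos : 1 ≤ 2 ^ n := Nat.one_le_two_pow
  have := Nat.two_pow_mod_three n
  split_ifs at this with hn <;> simp only [hn, iff_true, iff_false] <;> omega

theorem Nat.three_dvd_two_pow_add_one_iff (n : ℕ) : 3 ∣ 2 ^ n + 1 ↔ Odd n := by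
  have := Nat.two_pow_mod_three n
  rw [← Nat.not_even_iff_odd]
  split_ifs at this with hn <;>
    simp only [hn, not_true, not_false_iff, iff_true, iff_false] <;> omega

theorem stmt_12_general (m k : ℕ) (h : k ∣ m + 1) :
    (Odd k → Nat.gcd (2 ^ k - 1) (2 ^ m + 1) = 1) ∧
    (Even k → Nat.gcd (2 ^ k - 1) (2 ^ m + 1) = 3) := by
  have hd3 : Nat.gcd (2 ^ k - 1) (2 ^ m + 1) ∣ 3 := Nat.gcd_pow_sub_one_pow_add_one_dvd two_pos h
  refine ⟨fun hodd => ?_, fun heven => ?_⟩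
  · refine ((Nat.dvd_prime Nat.prime_three).mp hd3).resolve_right fun h3 => ?_
    have : 3 ∣ 2 ^ k - 1 := h3 ▸ Nat.gcd_dvd_left _ _
    exact Nat.not_even_iff_odd.mpr hodd ((Nat.three_dvd_two_pow_sub_one_iff k).mp this)
  · have hm : Odd m :=
      Nat.not_even_iff_odd.mp (Nat.even_add_one.mp (even_iff_two_dvd.mpr (heven.two_dvd.trans h)))
    exact Nat.dvd_antisymm hd3 (Nat.dvd_gcd ((Nat.three_dvd_two_pow_sub_one_iff k).mpr heven)
      ((Nat.three_dvd_two_pow_add_one_iff m).mpr hm))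

/-- if `k ∣ m + 1` (i.e. `m ≡ -1 (mod k)`), then
`gcd(2^k - 1, 2^m + 1) = 1` when `k` is odd and `= 3` when `k` is even. -/
theorem stmt_12 (m k : ℕ) (hm : 0 < m) (hk : 0 < k) (h : k ∣ m + 1) :
    (Odd k → Nat.gcd (2 ^ k - 1) (2 ^ m + 1) = 1) ∧
    (Even k → Nat.gcd (2 ^ k - 1) (2 ^ m + 1) = 3) :=
  stmt_12_general m k h
end

section
/- Let p be an odd prime, m positive, n = 2m, q = p^n. Let t ≡ 2 (mod 4) with t not ≡ 0 (mod p^m+1), s_1 = (t+2)/4, s_2 = (3t+2)/4, d_1 = s_1(p^m-1)+1, d_2 = s_2(p^m-1)+1, and l = gcd(t, p^m+1). Then the number of pairs (x,y) in F_q^2 with x^{d_1} + y^{d_1} = 0 and x^{d_2} + y^{d_2} = 0 equals ((p^n - 1)/2) * l + 1. -/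
/-! Both exponents `d₁ = s₁(p^m-1)+1` and `d₂ = s₂(p^m-1)+1` are odd, so `y ↦ -y` turns the
system into `x^{d₁} = y^{d₁}, x^{d₂} = y^{d₂}`, i.e. `x^e = y^e` with `e = gcd(d₁, d₂)`. Besides
`(0,0)` its solutions are the pairs `(x, zx)` with `x ∈ F_qˣ` and `z` in the `e`-torsion of the
cyclic group `F_qˣ`, which has `gcd(e, q-1)` elements. Finally `d₂ - d₁ = (t/2)(p^m-1)`,
`d₁ ≡ 1 mod p^m-1` and `2d₁ = (t/2)(p^m-1) + (p^m+1)` give `gcd(e, q-1) = gcd(t/2, p^m+1) = l/2`. -/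

def powEqPowEquivProdKer {G : Type*} [CommGroup G] (e : ℕ) :
    {xy : G × G // xy.1 ^ e = xy.2 ^ e} ≃ G × (powMonoidHom e : G →* G).ker where
  toFun xy := (xy.1.1, ⟨xy.1.2 / xy.1.1, by simp [div_pow, xy.2]⟩)
  invFun xz := ⟨(xz.1, xz.2 * xz.1), by
    have hz : (xz.2 : G) ^ e = 1 := xz.2.2
    rw [mul_pow, hz, one_mul]⟩
  left_inv xy := by ext <;> simp
  right_inv xz := by ext <;> simp

theorem IsCyclic.card_pow_eq_pow {G : Type*} [CommGroup G] [IsCyclic G] [Finite G] (e : ℕ) :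
    Nat.card {xy : G × G // xy.1 ^ e = xy.2 ^ e} = Nat.card G * (Nat.card G).gcd e := by
  rw [Nat.card_congr (powEqPowEquivProdKer e), Nat.card_prod, IsCyclic.card_powMonoidHom_ker]

theorem eq_zero_iff_of_pow_eq_pow {M₀ : Type*} [MonoidWithZero M₀] [NoZeroDivisors M₀] {e : ℕ}
    (he : e ≠ 0) {x y : M₀} (h : x ^ e = y ^ e) : x = 0 ↔ y = 0 := by
  rw [← pow_eq_zero_iff he, h, pow_eq_zero_iff he]

open Classical in
noncomputable def powEqPowEquivOptionUnits {G₀ : Type*} [GroupWithZero G₀] {e : ℕ} (he : e ≠ 0) :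
    {xy : G₀ × G₀ // xy.1 ^ e = xy.2 ^ e} ≃ Option {xy : G₀ˣ × G₀ˣ // xy.1 ^ e = xy.2 ^ e} where
  toFun xy :=
    if hx : xy.1.1 = 0 then none
    else some ⟨(.mk0 _ hx, .mk0 _ fun hy => hx ((eq_zero_iff_of_pow_eq_pow he xy.2).mpr hy)),
      Units.ext (by simpa using xy.2)⟩
  invFun o := o.elim ⟨(0, 0), rfl⟩ fun xy =>
    ⟨(xy.1.1, xy.1.2), by simpa using congrArg Units.val xy.2⟩
  left_inv := by
    rintro ⟨⟨x, y⟩, h⟩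
    by_cases hx : x = 0
    · have hy : y = 0 := (eq_zero_iff_of_pow_eq_pow he h).mp hx
      simp [hx, hy]
    · simp [hx]
  right_inv := by
    rintro (_ | ⟨⟨x, y⟩, h⟩) <;> simp

theorem card_pow_eq_pow {G₀ : Type*} [CommGroupWithZero G₀] [Finite G₀] [IsCyclic G₀ˣ] {e : ℕ}
    (he : e ≠ 0) :
    Nat.card {xy : G₀ × G₀ // xy.1 ^ e = xy.2 ^ e} =
      (Nat.card G₀ - 1) * (Nat.card G₀ - 1).gcd e + 1 := by
  rw [Nat.card_congr (powEqPowEquivOptionUnits he), Finite.card_option, IsCyclic.card_pow_eq_pow,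
    Nat.card_units]

theorem pow_gcd_eq_pow_gcd_iff {G₀ : Type*} [CommGroupWithZero G₀] {a b : ℕ} (ha : a ≠ 0)
    {x y : G₀} : x ^ a.gcd b = y ^ a.gcd b ↔ x ^ a = y ^ a ∧ x ^ b = y ^ b := by
  rcases eq_or_ne x 0 with rfl | hx
  · rw [zero_pow ha, zero_pow (Nat.gcd_ne_zero_left ha), eq_comm,
      pow_eq_zero_iff (Nat.gcd_ne_zero_left ha), eq_comm (a := 0), pow_eq_zero_iff ha]
    exact ⟨fun hy => ⟨hy, by rw [hy]⟩, And.left⟩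
  · have hquot (n : ℕ) : x ^ n = y ^ n ↔ (y / x) ^ n = 1 := by
      rw [div_pow, div_eq_one_iff_eq (pow_ne_zero n hx), eq_comm]
    simp only [hquot, pow_gcd_eq_one]

theorem card_pow_add_pow_eq_zero_of_odd {K : Type*} [Field K] [Finite K] {a b : ℕ} (ha : Odd a)
    (hb : Odd b) :
    Nat.card {xy : K × K // xy.1 ^ a + xy.2 ^ a = 0 ∧ xy.1 ^ b + xy.2 ^ b = 0} =
      (Nat.card K - 1) * (Nat.card K - 1).gcd (a.gcd b) + 1 := by
  rw [← card_pow_eq_pow (Nat.gcd_ne_zero_left ha.pos.ne')]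
  refine Nat.card_congr (Equiv.subtypeEquiv ((Equiv.refl K).prodCongr (Equiv.neg K)) fun xy => ?_)
  rw [Equiv.prodCongr_apply, pow_gcd_eq_pow_gcd_iff ha.pos.ne']
  simp [ha.neg_pow, hb.neg_pow, eq_neg_iff_add_eq_zero]

theorem gcd_sq_sub_one_gcd_exponents_mul_two {P : ℕ} (hP : Odd P) (c : ℕ) :
    (P ^ 2 - 1).gcd (((c + 1) * (P - 1) + 1).gcd ((3 * c + 2) * (P - 1) + 1)) * 2 =
      (4 * c + 2).gcd (P + 1) := by
  obtain ⟨b, rfl⟩ := hP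
  set d := (c + 1) * (2 * b) + 1
  set u := 2 * c + 1
  have hu : Nat.Coprime 2 u := by simp [u]
  have hd : (3 * c + 2) * (2 * b) + 1 = u * (2 * b) + d := by ring
  have hcop : Nat.Coprime (2 * b) d := by simp [d, Nat.coprime_comm]
  have hdvd : u.gcd (2 * b + 2) ∣ d := by
    refine (Nat.Coprime.coprime_dvd_left (Nat.gcd_dvd_left _ _) hu.symm).dvd_of_dvd_mul_left ?_
    have h2d : 2 * d = u * (2 * b) + (2 * b + 2) := by ring
    rw [h2d]
    exact dvd_add ((Nat.gcd_dvd_left _ _).mul_right _) (Nat.gcd_dvd_right _ _)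
  have hsq : (2 * b + 1) ^ 2 - 1 = 2 * b * (2 * b + 2) := by
    rw [Nat.sub_eq_of_eq_add]; ring
  calc (((2 * b + 1) ^ 2 - 1).gcd (d.gcd ((3 * c + 2) * (2 * b + 1 - 1) + 1))) * 2
      = (2 * b * (2 * b + 2)).gcd (d.gcd (u * (2 * b))) * 2 := by
        rw [hsq, Nat.add_sub_cancel, hd, Nat.gcd_add_self_right]
    _ = d.gcd (2 * b * u.gcd (2 * b + 2)) * 2 := by
        rw [Nat.gcd_comm, Nat.gcd_assoc, mul_comm u, Nat.gcd_mul_left]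
    _ = u.gcd (2 * b + 2) * 2 := by
        rw [hcop.gcd_mul_left_cancel_right, Nat.gcd_eq_right hdvd]
    _ = (4 * c + 2).gcd (2 * b + 1 + 1) := by
        rw [show 4 * c + 2 = 2 * u by ring, show 2 * b + 1 + 1 = 2 * (b + 1) by ring,
          Nat.gcd_mul_left, hu.gcd_mul_left_cancel_right, mul_comm]

theorem stmt_13_general (p m t : ℕ) [Fact p.Prime] (hp : Odd p) (hm : 0 < m)
    (ht : t % 4 = 2) :
    Nat.card {xy : GaloisField p (2 * m) × GaloisField p (2 * m) //
      xy.1 ^ ((t + 2) / 4 * (p ^ m - 1) + 1) +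
        xy.2 ^ ((t + 2) / 4 * (p ^ m - 1) + 1) = 0 ∧
      xy.1 ^ ((3 * t + 2) / 4 * (p ^ m - 1) + 1) +
        xy.2 ^ ((3 * t + 2) / 4 * (p ^ m - 1) + 1) = 0} =
    (p ^ (2 * m) - 1) / 2 * Nat.gcd t (p ^ m + 1) + 1 := by
  obtain ⟨c, rfl⟩ : ∃ c, t = 4 * c + 2 := ⟨t / 4, by omega⟩
  have hP : Odd (p ^ m) := hp.pow
  have hcard : Nat.card (GaloisField p (2 * m)) = (p ^ m) ^ 2 := by
    rw [GaloisField.card p (2 * m) (by omega), pow_mul']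
  have hodd (k : ℕ) : Odd (k * (p ^ m - 1) + 1) :=
    ((Nat.Odd.sub_odd hP odd_one).mul_left k).add_one
  rw [show (4 * c + 2 + 2) / 4 = c + 1 by omega,
    show (3 * (4 * c + 2) + 2) / 4 = 3 * c + 2 by omega,
    card_pow_add_pow_eq_zero_of_odd (hodd _) (hodd _), hcard, pow_mul',
    ← gcd_sq_sub_one_gcd_exponents_mul_two hP, ← mul_assoc, mul_right_comm,
    Nat.div_mul_cancel (Nat.Odd.sub_odd hP.pow odd_one).two_dvd]

/-- `p` odd prime, `q = p^{2m}`, `t ≡ 2 (mod 4)`, `t ≢ 0 (mod p^m+1)`,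
`s₁ = (t+2)/4`, `s₂ = (3t+2)/4`, `dᵢ = sᵢ(p^m-1)+1`, `l = gcd(t, p^m+1)`.  The number
of pairs `(x,y) ∈ F_q²` with `x^{d₁}+y^{d₁} = 0` and `x^{d₂}+y^{d₂} = 0` equals
`((p^{2m}-1)/2)·l + 1`. -/
theorem stmt_13 (p m t : ℕ) [Fact p.Prime] (hp : Odd p) (hm : 0 < m)
    (ht : t % 4 = 2) (ht' : ¬ (p ^ m + 1) ∣ t) :
    Nat.card {xy : GaloisField p (2 * m) × GaloisField p (2 * m) //
      xy.1 ^ ((t + 2) / 4 * (p ^ m - 1) + 1) +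
        xy.2 ^ ((t + 2) / 4 * (p ^ m - 1) + 1) = 0 ∧
      xy.1 ^ ((3 * t + 2) / 4 * (p ^ m - 1) + 1) +
        xy.2 ^ ((3 * t + 2) / 4 * (p ^ m - 1) + 1) = 0} =
    (p ^ (2 * m) - 1) / 2 * Nat.gcd t (p ^ m + 1) + 1 :=
  stmt_13_general p m t hp hm ht
end

section
/- Let p = 2, m ≥ 1, n = 2m, q = 2^n, and let d_1 = s_1(2^m-1)+1, d_2 = s_2(2^m-1)+1 be Niho exponents. For a, b in F_q, let T_1(a,b) = Σ_{x in F_q} (-1)^{Tr(a x^{d_1} + b x^{d_2})}, where Tr is the absolute trace from F_q to F_2. Then T_1(a,b) = (V(a,b) - 1) * 2^m, where V(a,b) is the number of z in S = {z : z * z^{2^m} = 1} satisfying b^{2^m} z^{2 s_2 - 1} + a^{2^m} z^{s_1 + s_2 - 1} + a z^{s_2 - s_1} + b = 0. -/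
noncomputable instance (p n : ℕ) [Fact p.Prime] : Fintype (GaloisField p n) :=
  Fintype.ofFinite _

/-!
Write `Q = 2^m`, `S = {z | z^(Q+1) = 1}` and `𝔽_Q^* = {t | t^(Q-1) = 1}`. Every `x ≠ 0` factors
uniquely as `x = z^(Q/2+1) t` with `z ∈ S`, `t ∈ 𝔽_Q^*`, and then `x^(Q-1) = z⁻¹`, so that
`a x^d₁ + b x^d₂ = t u_z` with `u_z = z^(Q/2+1) (a z^(-s₁) + b z^(-s₂))`. Summing the character
`(-1)^Tr` of `t u_z` over `t ∈ 𝔽_Q` gives `Q` if `u_z ∈ 𝔽_Q` and `0` otherwise, and `u_z ∈ 𝔽_Q`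
is exactly the Niho equation at `z`. Hence `T₁ = 1 + ∑_{z ∈ S} (Q [z solves it] - 1) = Q V - Q`,
as `|S| = Q + 1`.
-/

open Finset

section RootsOfUnity

variable {F : Type*} [Field F] [Fintype F] {Q : ℕ}

lemma one_lt_of_card_eq_sq (hF : Fintype.card F = Q ^ 2) : 1 < Q :=
  lt_of_pow_lt_pow_left₀ 2 Q.zero_le (by rw [one_pow, ← hF]; exact Fintype.one_lt_card)

lemma pow_sub_one_pow_add_one_eq_one (hF : Fintype.card F = Q ^ 2) {x : F} (hx : x ≠ 0) :
    (x ^ (Q - 1)) ^ (Q + 1) = 1 := by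
  rw [← pow_mul, mul_comm, ← Nat.sq_sub_sq, one_pow, ← hF]
  exact FiniteField.pow_card_sub_one_eq_one x hx

-- The exponent `Q/2 + 1` inverts `-(Q - 1)` modulo `Q + 1`: `(Q/2 + 1)(Q - 1) + 1 = (Q/2)(Q + 1)`.
lemma pow_div_two_add_one_pow_sub_one_mul_self {M : Type*} [Monoid M] {z : M} (hQ : Even Q)
    (hz : z ^ (Q + 1) = 1) : (z ^ (Q / 2 + 1)) ^ (Q - 1) * z = 1 := by
  obtain ⟨h, rfl⟩ := hQ
  rcases h with _ | h
  · simpa using hz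
  · have hexp : ((h + 1 + (h + 1)) / 2 + 1) * (h + 1 + (h + 1) - 1) + 1
        = (h + 1 + (h + 1) + 1) * (h + 1) := by
      rw [show (h + 1 + (h + 1)) / 2 = h + 1 by omega,
        show h + 1 + (h + 1) - 1 = 2 * h + 1 by omega]
      ring
    rw [← pow_mul, ← pow_succ, hexp, pow_mul, hz, one_pow]

variable [DecidableEq F]

lemma card_filter_pow_eq_one_le {n : ℕ} (hn : 0 < n) : #{x : F | x ^ n = 1} ≤ n :=
  calc #{x : F | x ^ n = 1} ≤ #(Polynomial.nthRootsFinset n (1 : F)) :=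
        card_le_card fun x hx => (Polynomial.mem_nthRootsFinset hn 1).2 (mem_filter.1 hx).2
    _ ≤ n := by
      rw [Polynomial.nthRootsFinset_def]
      exact (Multiset.toFinset_card_le _).trans (Polynomial.card_nthRoots n 1)

lemma sum_erase_zero_eq_sum_sum (hF : Fintype.card F = Q ^ 2) (hQ : Even Q) {M : Type*}
    [AddCommMonoid M] (g : F → M) :
    ∑ x ∈ univ.erase 0, g x =
      ∑ z ∈ {z : F | z ^ (Q + 1) = 1}, ∑ t ∈ {t : F | t ^ (Q - 1) = 1},
        g (z ^ (Q / 2 + 1) * t) := by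
  have hQ1 : Q - 1 ≠ 0 := by have := one_lt_of_card_eq_sq hF; omega
  have hz0 {z : F} (hz : z ^ (Q + 1) = 1) : z ≠ 0 := by rintro rfl; simp at hz
  have ht0 {t : F} (ht : t ^ (Q - 1) = 1) : t ≠ 0 := by rintro rfl; simp [zero_pow hQ1] at ht
  have hr {z : F} (hz : z ^ (Q + 1) = 1) : (z ^ (Q / 2 + 1)) ^ (Q - 1) = z⁻¹ :=
    eq_inv_of_mul_eq_one_left (pow_div_two_add_one_pow_sub_one_mul_self hQ hz)
  rw [← sum_product']
  refine sum_nbij' (fun x => ((x ^ (Q - 1))⁻¹, x / ((x ^ (Q - 1))⁻¹) ^ (Q / 2 + 1)))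
    (fun p => p.1 ^ (Q / 2 + 1) * p.2) ?_ ?_ ?_ ?_ ?_
  · intro x hx
    have hx0 : x ≠ 0 := ne_of_mem_erase hx
    have hz : ((x ^ (Q - 1))⁻¹) ^ (Q + 1) = 1 := by
      rw [inv_pow, pow_sub_one_pow_add_one_eq_one hF hx0, inv_one]
    simp only [mem_product, mem_filter, mem_univ, true_and]
    rw [div_pow, hr hz, inv_inv, div_self (pow_ne_zero _ hx0)]
    exact ⟨hz, rfl⟩
  · rintro ⟨z, t⟩ h
    simp only [mem_product, mem_filter, mem_univ, true_and] at h
    exact mem_erase.2 ⟨mul_ne_zero (pow_ne_zero _ (hz0 h.1)) (ht0 h.2), mem_univ _⟩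
  · intro x hx
    exact mul_div_cancel₀ x (pow_ne_zero _ (inv_ne_zero (pow_ne_zero _ (ne_of_mem_erase hx))))
  · rintro ⟨z, t⟩ h
    simp only [mem_product, mem_filter, mem_univ, true_and] at h
    have hz : ((z ^ (Q / 2 + 1) * t) ^ (Q - 1))⁻¹ = z := by
      rw [mul_pow, hr h.1, h.2, mul_one, inv_inv]
    simp only [hz, mul_div_cancel_left₀ t (pow_ne_zero _ (hz0 h.1))]
  · intro x hx
    simp only [mul_div_cancel₀ x (pow_ne_zero _ (inv_ne_zero (pow_ne_zero _ (ne_of_mem_erase hx))))]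

-- Both counts are at most the degree, and their product is `#F^* = (Q + 1) (Q - 1)`.
lemma card_filter_pow_add_one_eq_one_and_card_filter_pow_sub_one_eq_one
    (hF : Fintype.card F = Q ^ 2) (hQ : Even Q) :
    #{z : F | z ^ (Q + 1) = 1} = Q + 1 ∧ #{t : F | t ^ (Q - 1) = 1} = Q - 1 := by
  have hQ1 := one_lt_of_card_eq_sq hF
  have hprod : #{z : F | z ^ (Q + 1) = 1} * #{t : F | t ^ (Q - 1) = 1} = (Q + 1) * (Q - 1) := by
    have := sum_erase_zero_eq_sum_sum hF hQ (fun _ => 1)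
    simp only [sum_const, smul_eq_mul, mul_one, card_erase_of_mem (mem_univ _), card_univ,
      hF] at this
    rw [← this, ← Nat.sq_sub_sq, one_pow]
  have hS := card_filter_pow_eq_one_le (F := F) Q.succ_pos
  have hK := card_filter_pow_eq_one_le (F := F) (n := Q - 1) (by omega)
  obtain ⟨P, rfl⟩ : ∃ P, Q = P + 1 := ⟨Q - 1, by omega⟩
  simp only [Nat.add_sub_cancel] at *
  constructor <;> nlinarith

lemma filter_pow_eq_self_eq_insert (hQ : Q ≠ 0) :
    ({t | t ^ Q = t} : Finset F) = insert 0 ({t | t ^ (Q - 1) = 1} : Finset F) := by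
  ext t
  simp only [mem_insert, mem_filter, mem_univ, true_and]
  rcases eq_or_ne t 0 with rfl | ht
  · simp [zero_pow hQ]
  · rw [← pow_sub_one_mul hQ, mul_eq_right₀ ht]
    simp [ht]

lemma card_filter_pow_eq_self (hF : Fintype.card F = Q ^ 2) (hQ : Even Q) :
    #{t : F | t ^ Q = t} = Q := by
  have hQ1 := one_lt_of_card_eq_sq hF
  rw [filter_pow_eq_self_eq_insert (by omega), card_insert_of_notMem,
    (card_filter_pow_add_one_eq_one_and_card_filter_pow_sub_one_eq_one hF hQ).2]
  · omega
  · simp [zero_pow (show Q - 1 ≠ 0 by omega)]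

end RootsOfUnity

section NihoCondition

variable {F : Type*} [Field F]

def nihoPoly (Q s₁ s₂ : ℕ) (a b z : F) : F :=
  b ^ Q * z ^ (2 * (s₂ : ℤ) - 1) + a ^ Q * z ^ ((s₁ : ℤ) + (s₂ : ℤ) - 1) +
    a * z ^ ((s₂ : ℤ) - (s₁ : ℤ)) + b

lemma nihoPoly_eq_pow_mul {Q s₁ s₂ : ℕ} {a b z : F} (hz : z ≠ 0) :
    nihoPoly Q s₁ s₂ a b z = z ^ s₂ *
      (z⁻¹ * (a ^ Q * z ^ s₁ + b ^ Q * z ^ s₂) + (a * (z ^ s₁)⁻¹ + b * (z ^ s₂)⁻¹)) := by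
  simp only [nihoPoly, zpow_sub₀ hz, zpow_add₀ hz, zpow_natCast, zpow_one, mul_comm (2 : ℤ),
    zpow_mul]
  field_simp
  ring

lemma mul_pow_two_pow_eq_self_iff_nihoPoly_eq_zero [CharP F 2] {m s₁ s₂ : ℕ} {a b z r : F}
    (hz : z ^ (2 ^ m + 1) = 1) (hr : r ≠ 0) (hrz : r ^ (2 ^ m - 1) = z⁻¹) :
    (r * (a * (z ^ s₁)⁻¹ + b * (z ^ s₂)⁻¹)) ^ 2 ^ m = r * (a * (z ^ s₁)⁻¹ + b * (z ^ s₂)⁻¹) ↔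
      nihoPoly (2 ^ m) s₁ s₂ a b z = 0 := by
  have hz0 : z ≠ 0 := by rintro rfl; simp at hz
  have hzQ : z ^ 2 ^ m = z⁻¹ := eq_inv_of_mul_eq_one_left (by rwa [← pow_succ])
  have hrQ : r ^ 2 ^ m = r * z⁻¹ := by
    rw [← hrz, ← pow_succ', Nat.sub_add_cancel Nat.one_le_two_pow]
  have hinv (s : ℕ) : ((z ^ s)⁻¹) ^ 2 ^ m = z ^ s := by
    rw [inv_pow, ← pow_mul, mul_comm, pow_mul, hzQ, inv_pow, inv_inv]
  rw [mul_pow, add_pow_char_pow, mul_pow, mul_pow, hinv, hinv, hrQ, mul_assoc, mul_right_inj' hr,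
    ← CharTwo.add_eq_zero, nihoPoly_eq_pow_mul hz0, mul_eq_zero, or_iff_right (pow_ne_zero _ hz0)]

end NihoCondition

section Trace

variable (F : Type*) [Field F] [Algebra (ZMod 2) F]

noncomputable def traceChar : AddChar F ℤ :=
  (AddChar.zmodChar 2 (neg_one_sq : (-1 : ℤ) ^ 2 = 1)).compAddMonoidHom
    (Algebra.trace (ZMod 2) F).toAddMonoidHom

lemma traceChar_apply (x : F) : traceChar F x = (-1) ^ (Algebra.trace (ZMod 2) F x).val := rfl

variable {F} [Fintype F] {m : ℕ}

lemma card_eq_two_pow_sq (hF : Module.finrank (ZMod 2) F = 2 * m) :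
    Fintype.card F = (2 ^ m) ^ 2 := by
  rw [Module.card_eq_pow_finrank (K := ZMod 2), hF, ZMod.card, ← pow_mul, mul_comm]

lemma ne_zero_of_finrank_eq (hF : Module.finrank (ZMod 2) F = 2 * m) : m ≠ 0 := by
  have := Module.finrank_pos (R := ZMod 2) (M := F)
  omega

lemma algebraMap_trace_eq_sum_pow_add_pow (hF : Module.finrank (ZMod 2) F = 2 * m) (x : F) :
    algebraMap (ZMod 2) F (Algebra.trace (ZMod 2) F x) =
      ∑ i ∈ range m, (x + x ^ 2 ^ m) ^ 2 ^ i := by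
  have := charP_of_injective_algebraMap' (ZMod 2) (A := F) 2
  rw [FiniteField.algebraMap_trace_eq_sum_pow, hF, Nat.card_zmod, two_mul, sum_range_add,
    ← sum_add_distrib]
  refine sum_congr rfl fun i _ => ?_
  rw [add_pow_char_pow, ← pow_mul, ← pow_add]

-- The trace factors through `L x = x + x^Q`, and `L (t u) = t L u` for `t ∈ 𝔽_Q`. If `L u ≠ 0`,
-- every value `L x ∈ 𝔽_Q` is some `t L u`, so the trace would vanish identically.
lemma forall_trace_mul_eq_zero_iff (hF : Module.finrank (ZMod 2) F = 2 * m) (u : F) :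
    (∀ t : F, t ^ 2 ^ m = t → Algebra.trace (ZMod 2) F (t * u) = 0) ↔ u ^ 2 ^ m = u := by
  have := charP_of_injective_algebraMap' (ZMod 2) (A := F) 2
  have hfix (x : F) : (x + x ^ 2 ^ m) ^ 2 ^ m = x + x ^ 2 ^ m := by
    rw [add_pow_char_pow, ← pow_mul, ← sq, ← card_eq_two_pow_sq hF, FiniteField.pow_card, add_comm]
  have htr (x : F) :
      Algebra.trace (ZMod 2) F x = 0 ↔ ∑ i ∈ range m, (x + x ^ 2 ^ m) ^ 2 ^ i = 0 := by
    rw [← algebraMap_trace_eq_sum_pow_add_pow hF,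
      map_eq_zero_iff _ (algebraMap (ZMod 2) F).injective]
  refine ⟨fun h => ?_, fun hu t ht => ?_⟩
  · by_contra hu
    have hw : u + u ^ 2 ^ m ≠ 0 := fun h0 => hu (CharTwo.add_eq_zero.1 h0).symm
    refine Algebra.trace_ne_zero (ZMod 2) F (LinearMap.ext fun x => ?_)
    set t := (x + x ^ 2 ^ m) / (u + u ^ 2 ^ m)
    have ht : t ^ 2 ^ m = t := by rw [div_pow, hfix, hfix]
    have hL : t * u + (t * u) ^ 2 ^ m = x + x ^ 2 ^ m := by
      rw [mul_pow, ht, ← mul_add, div_mul_cancel₀ _ hw]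
    rw [LinearMap.zero_apply, htr, ← hL, ← htr]
    exact h t ht
  · rw [htr, mul_pow, ht, hu, CharTwo.add_self_eq_zero]
    simp

lemma sum_traceChar_mul (hF : Module.finrank (ZMod 2) F = 2 * m) [DecidableEq F] (u : F) :
    ∑ t ∈ {t : F | t ^ 2 ^ m = t}, traceChar F (t * u) =
      if u ^ 2 ^ m = u then (#{t : F | t ^ 2 ^ m = t} : ℤ) else 0 := by
  have := charP_of_injective_algebraMap' (ZMod 2) (A := F) 2
  split_ifs with hu
  · rw [← nsmul_one, ← sum_const]
    refine sum_congr rfl fun t ht => ?_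
    rw [traceChar_apply, (forall_trace_mul_eq_zero_iff hF u).2 hu t (mem_filter.1 ht).2]
    rfl
  · obtain ⟨t₁, ht₁, htr⟩ :
        ∃ t₁ : F, t₁ ^ 2 ^ m = t₁ ∧ Algebra.trace (ZMod 2) F (t₁ * u) ≠ 0 := by
      simpa using mt (forall_trace_mul_eq_zero_iff hF u).1 hu
    have hψ : traceChar F (t₁ * u) ≠ 1 := by
      rw [traceChar_apply]
      generalize Algebra.trace (ZMod 2) F (t₁ * u) = c at htr ⊢
      revert c
      decide
    have hmem {t : F} (ht : t ∈ ({t | t ^ 2 ^ m = t} : Finset F)) :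
        t + t₁ ∈ ({t | t ^ 2 ^ m = t} : Finset F) := by
      rw [mem_filter] at ht ⊢
      rw [add_pow_char_pow, ht.2, ht₁]
      exact ⟨mem_univ _, rfl⟩
    have hinv (t : F) : t + t₁ + t₁ = t := by rw [add_assoc, CharTwo.add_self_eq_zero, add_zero]
    refine eq_zero_of_mul_eq_self_left hψ ?_
    rw [mul_sum]
    exact sum_nbij' (· + t₁) (· + t₁) (fun t => hmem) (fun t => hmem) (fun t _ => hinv t)
      (fun t _ => hinv t) fun t _ => by rw [← AddChar.map_add_eq_mul, add_mul, add_comm]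

lemma sum_traceChar_coset (hF : Module.finrank (ZMod 2) F = 2 * m) [DecidableEq F]
    {s₁ s₂ : ℕ} {a b z : F} (hz : z ^ (2 ^ m + 1) = 1) :
    ∑ t ∈ {t : F | t ^ (2 ^ m - 1) = 1},
        traceChar F (a * (z ^ (2 ^ m / 2 + 1) * t) ^ (s₁ * (2 ^ m - 1) + 1) +
          b * (z ^ (2 ^ m / 2 + 1) * t) ^ (s₂ * (2 ^ m - 1) + 1)) =
      (if nihoPoly (2 ^ m) s₁ s₂ a b z = 0 then (2 ^ m : ℤ) else 0) - 1 := by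
  have := charP_of_injective_algebraMap' (ZMod 2) (A := F) 2
  have hQ : Even (2 ^ m) := (Nat.even_pow' (ne_zero_of_finrank_eq hF)).2 even_two
  have hQ1 : 2 ^ m - 1 ≠ 0 := Nat.sub_ne_zero_of_lt (Nat.one_lt_two_pow (ne_zero_of_finrank_eq hF))
  have hz0 : z ≠ 0 := by rintro rfl; simp at hz
  set r := z ^ (2 ^ m / 2 + 1)
  have hr : r ^ (2 ^ m - 1) = z⁻¹ :=
    eq_inv_of_mul_eq_one_left (pow_div_two_add_one_pow_sub_one_mul_self hQ hz)
  have hr0 : r ≠ 0 := pow_ne_zero _ hz0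
  have hpow {t : F} (ht : t ^ (2 ^ m - 1) = 1) (s : ℕ) :
      (r * t) ^ (s * (2 ^ m - 1) + 1) = (z ^ s)⁻¹ * (r * t) := by
    rw [pow_succ', mul_comm s, pow_mul, mul_pow, hr, ht, mul_one, inv_pow, mul_comm]
  have hsum := sum_traceChar_mul hF (r * (a * (z ^ s₁)⁻¹ + b * (z ^ s₂)⁻¹))
  simp only [mul_pow_two_pow_eq_self_iff_nihoPoly_eq_zero hz hr0 hr] at hsum
  rw [card_filter_pow_eq_self (card_eq_two_pow_sq hF) hQ,
    filter_pow_eq_self_eq_insert (by positivity), sum_insert (by simp [zero_pow hQ1]), zero_mul,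
    AddChar.map_zero_eq_one] at hsum
  push_cast at hsum
  rw [← hsum, add_sub_cancel_left]
  refine sum_congr rfl fun t ht => ?_
  rw [hpow (mem_filter.1 ht).2, hpow (mem_filter.1 ht).2]
  congr 1
  ring

end Trace

/-- Niho's lemma, part 2: for `q = 2^{2m}` and Niho exponents
`d₁ = s₁(2^m-1)+1`, `d₂ = s₂(2^m-1)+1`, the exponential sum
`T₁(a,b) = Σ_{x∈F_q} (-1)^{Tr(a x^{d₁} + b x^{d₂})}` equals `(V(a,b) - 1)·2^m`,
where `V(a,b)` is the number of `z ∈ S = {z : z·z^{2^m} = 1}` with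
`b̄ z^{2s₂-1} + ā z^{s₁+s₂-1} + a z^{s₂-s₁} + b = 0` (with `x̄ = x^{2^m}`,
exponents of `z` taken as integers, via inverses in `S` when negative). -/
theorem stmt_15 (m s1 s2 : ℕ) (hm : 0 < m) (a b : GaloisField 2 (2 * m)) :
    (∑ x : GaloisField 2 (2 * m),
        (-1 : ℤ) ^ (Algebra.trace (ZMod 2) (GaloisField 2 (2 * m))
          (a * x ^ (s1 * (2 ^ m - 1) + 1) + b * x ^ (s2 * (2 ^ m - 1) + 1))).val) =
    ((Nat.card {z : GaloisField 2 (2 * m) // z * z ^ (2 ^ m) = 1 ∧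
        b ^ (2 ^ m) * z ^ (2 * (s2 : ℤ) - 1) +
          a ^ (2 ^ m) * z ^ ((s1 : ℤ) + (s2 : ℤ) - 1) +
          a * z ^ ((s2 : ℤ) - (s1 : ℤ)) + b = 0} : ℤ) - 1) * 2 ^ m := by
  classical
  have hF : Module.finrank (ZMod 2) (GaloisField 2 (2 * m)) = 2 * m :=
    GaloisField.finrank 2 (by omega)
  have hQ : Even (2 ^ m) := (Nat.even_pow' hm.ne').2 even_two
  have hS := (card_filter_pow_add_one_eq_one_and_card_filter_pow_sub_one_eq_one
    (card_eq_two_pow_sq hF) hQ).1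
  have hV : Nat.card {z : GaloisField 2 (2 * m) // z * z ^ (2 ^ m) = 1 ∧
      nihoPoly (2 ^ m) s1 s2 a b z = 0} =
      #{z ∈ ({z | z ^ (2 ^ m + 1) = 1} : Finset (GaloisField 2 (2 * m))) |
        nihoPoly (2 ^ m) s1 s2 a b z = 0} := by
    rw [Nat.card_eq_fintype_card, Fintype.card_subtype, filter_filter]
    simp only [pow_succ']
  simp only [← traceChar_apply]
  rw [← add_sum_erase _ _ (mem_univ 0), sum_erase_zero_eq_sum_sum (card_eq_two_pow_sq hF) hQ,
    sum_congr rfl fun z hz => sum_traceChar_coset hF (mem_filter.1 hz).2]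
  change _ = ((Nat.card {z // _ ∧ nihoPoly (2 ^ m) s1 s2 a b z = 0} : ℤ) - 1) * 2 ^ m
  rw [hV, sum_sub_distrib, sum_ite, sum_const, sum_const, sum_const, hS]
  simp only [zero_pow (Nat.succ_ne_zero _), mul_zero, add_zero, AddChar.map_zero_eq_one,
    nsmul_eq_mul]
  push_cast
  ring
end

section
/- Let p = 2, m ≥ 1, n = 2m, q = 2^n, d_2 = s_2(2^m-1)+1. For a in F_{2^m} and b in F_q, let S(a,b) = Σ_{x in F_q} (-1)^{tr_m(a x^{2^m+1}) + Tr_n(b x^{d_2})}, where tr_m is the absolute trace on F_{2^m} and Tr_n the absolute trace on F_q (note x^{2^m+1} lies in F_{2^m}). Then S(a,b) = (U(a,b) - 1) * 2^m, where U(a,b) is the number of z in S = {z in F_q : z * z^{2^m} = 1} satisfying b^{2^m} z^{2(2 s_2 - 1)} + a^{1/2} z^{2 s_2 - 1} + b = 0, with a^{1/2} the unique square root of a in F_{2^m}. -/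
attribute [local instance] Classical.propDecidable

/-!
Let `K = {y : y ^ 2 ^ m = y}`, the subfield of order `2 ^ m`, and `S = {z : z * z ^ 2 ^ m = 1}`.
Every `x ≠ 0` is uniquely `y * z` with `0 ≠ y ∈ K` and `z ∈ S`, where `y` is the square root of
the norm `x ^ (2 ^ m + 1)`, so `|S| = 2 ^ m + 1`. For `x = y * z` and `u = z ^ (2 s₂ - 1)` we get
`x ^ (2 ^ m + 1) = y ^ 2` and `x ^ d₂ = y * u⁻¹`, and the exponent of `-1` collapses to
`tr_m (y * w)` with `w = a^{1/2} + b * u⁻¹ + b ^ 2 ^ m * u ∈ K`. Since `tr_m` is a nonzero linear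
form on `K`, the sum over `y ∈ K` is `2 ^ m` if `w = 0` and `0` otherwise, and `u * w` is the
polynomial of the statement evaluated at `z`.
-/

namespace Niho

open Finset Polynomial

variable {F : Type*} [Field F] {m : ℕ}

def traceSum (m : ℕ) (y : F) : F := ∑ i ∈ range m, y ^ 2 ^ i

noncomputable def bitSign (t : F) : ℤ := if t = 0 then 1 else -1

lemma traceSum_zero : traceSum m (0 : F) = 0 := by simp [traceSum]

lemma traceSum_two_mul (v : F) : traceSum (2 * m) v = traceSum m v + traceSum m (v ^ 2 ^ m) := by
  simp only [traceSum, two_mul, sum_range_add, ← pow_mul, ← pow_add]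

lemma quadratic_eq_zero_iff {b b' r u : F} (hu : u ≠ 0) :
    b' * u ^ 2 + r * u + b = 0 ↔ r + b * u⁻¹ + b' * u = 0 := by
  have h : b' * u ^ 2 + r * u + b = (r + b * u⁻¹ + b' * u) * u := by field_simp; ring
  rw [h, mul_eq_zero, or_iff_left hu]

section CharTwo

variable [CharP F 2]

lemma traceSum_add (u v : F) : traceSum m (u + v) = traceSum m u + traceSum m v := by
  simp only [traceSum, add_pow_char_pow, sum_add_distrib]

lemma traceSum_sq (y : F) : traceSum m (y ^ 2) = traceSum m y ^ 2 := by
  simp only [traceSum, sum_pow_char, ← pow_mul, mul_comm]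

lemma traceSum_sq_of_pow_eq {y : F} (hy : y ^ 2 ^ m = y) : traceSum m y ^ 2 = traceSum m y := by
  have h := (sum_range_succ' (fun i => y ^ 2 ^ i) m).symm.trans (sum_range_succ _ m)
  simp only [pow_zero, pow_one, hy, add_left_inj] at h
  simpa only [traceSum, sum_pow_char, ← pow_mul, ← pow_succ] using h

lemma traceSum_eq_zero_or_one {y : F} (hy : y ^ 2 ^ m = y) :
    traceSum m y = 0 ∨ traceSum m y = 1 :=
  IsIdempotentElem.iff_eq_zero_or_one.1 (by rw [IsIdempotentElem, ← sq, traceSum_sq_of_pow_eq hy])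

lemma bitSign_add_one {t : F} (ht : t = 0 ∨ t = 1) : bitSign (t + 1) = -bitSign t := by
  rcases ht with rfl | rfl <;> simp [bitSign, CharTwo.add_self_eq_zero]

end CharTwo

section

variable (F m) [Fintype F]

noncomputable def fixed : Finset F := univ.filter fun y => y ^ 2 ^ m = y

noncomputable def circle : Finset F := univ.filter fun z => z * z ^ 2 ^ m = 1

variable {F m}

@[simp] lemma mem_fixed {y : F} : y ∈ fixed F m ↔ y ^ 2 ^ m = y := by simp [fixed]

@[simp] lemma mem_circle {z : F} : z ∈ circle F m ↔ z * z ^ 2 ^ m = 1 := by simp [circle]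

lemma zero_mem_fixed : (0 : F) ∈ fixed F m := by simp

lemma mul_mem_fixed {u v : F} (hu : u ∈ fixed F m) (hv : v ∈ fixed F m) : u * v ∈ fixed F m := by
  rw [mem_fixed] at *
  rw [mul_pow, hu, hv]

lemma inv_mem_fixed {u : F} (hu : u ∈ fixed F m) : u⁻¹ ∈ fixed F m := by
  rw [mem_fixed] at *
  rw [inv_pow, hu]

lemma ne_zero_of_mem_circle {z : F} (hz : z ∈ circle F m) : z ≠ 0 := by
  rintro rfl
  simp at hz

lemma pow_two_pow_of_mem_circle {z : F} (hz : z ∈ circle F m) : z ^ 2 ^ m = z⁻¹ :=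
  eq_inv_of_mul_eq_one_right (mem_circle.1 hz)

lemma zpow_pow_two_pow_of_mem_circle {z : F} (hz : z ∈ circle F m) (k : ℤ) :
    (z ^ k) ^ 2 ^ m = (z ^ k)⁻¹ := by
  rw [← zpow_natCast, ← zpow_mul, mul_comm, zpow_mul, zpow_natCast,
    pow_two_pow_of_mem_circle hz, inv_zpow]

lemma pow_two_pow_two_mul (hF : Fintype.card F = 2 ^ (2 * m)) (x : F) : x ^ 2 ^ (2 * m) = x :=
  hF ▸ FiniteField.pow_card x

lemma pow_add_one_mem_fixed (hF : Fintype.card F = 2 ^ (2 * m)) (x : F) :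
    x ^ (2 ^ m + 1) ∈ fixed F m := by
  rw [mem_fixed, ← pow_mul, add_one_mul, ← pow_add 2 m m, ← two_mul, pow_add,
    pow_two_pow_two_mul hF, pow_succ, mul_comm]

lemma mul_pow_add_one {y z : F} (hy : y ∈ fixed F m) (hz : z ∈ circle F m) :
    (y * z) ^ (2 ^ m + 1) = y ^ 2 := by
  rw [mem_fixed] at hy
  rw [mem_circle] at hz
  rw [mul_pow, pow_succ, pow_succ, hy, mul_comm (z ^ _) z, hz, mul_one, sq]

lemma pow_mul_sub_one_add_one_of_mem_fixed {y : F} (hy : y ∈ fixed F m) (hy0 : y ≠ 0) (s : ℕ) :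
    y ^ (s * (2 ^ m - 1) + 1) = y := by
  rw [pow_succ, pow_mul', pow_sub₀ y hy0 Nat.one_le_two_pow, mem_fixed.1 hy, pow_one,
    mul_inv_cancel₀ hy0, one_pow, one_mul]

lemma pow_mul_sub_one_add_one_of_mem_circle {z : F} (hz : z ∈ circle F m) (s : ℕ) :
    z ^ (s * (2 ^ m - 1) + 1) = (z ^ (2 * (s : ℤ) - 1))⁻¹ := by
  have hz0 := ne_zero_of_mem_circle hz
  rw [pow_succ, pow_mul', pow_sub₀ z hz0 Nat.one_le_two_pow, pow_two_pow_of_mem_circle hz,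
    pow_one, ← zpow_neg, neg_sub, zpow_sub₀ hz0, zpow_one, zpow_mul, zpow_natCast, ← mul_inv,
    ← sq, inv_pow, div_eq_mul_inv, mul_comm, zpow_ofNat]

lemma card_filter_pow_sub_eq_le (hm : m ≠ 0) (c : F) :
    #{y | y ^ 2 ^ m - y = c} ≤ 2 ^ m := by
  have hdeg : (X ^ 2 ^ m - X - C c : F[X]).natDegree = 2 ^ m := by
    rw [natDegree_sub_C, FiniteField.X_pow_card_pow_sub_X_natDegree_eq F hm one_lt_two]
  have hne : (X ^ 2 ^ m - X - C c : F[X]) ≠ 0 := by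
    intro h
    rw [h, natDegree_zero] at hdeg
    exact (pow_ne_zero m two_ne_zero) hdeg.symm
  refine hdeg ▸ card_le_degree_of_subset_roots fun y hy => ?_
  rw [mem_roots hne]
  simp_all

variable [CharP F 2]

lemma mem_fixed_of_sq_mem {r : F} (h : r ^ 2 ∈ fixed F m) : r ∈ fixed F m := by
  rw [mem_fixed] at *
  exact frobenius_inj F 2 (by rw [frobenius_def, frobenius_def, ← pow_mul, mul_comm, pow_mul, h])

lemma card_fixed (hm : m ≠ 0) (hF : Fintype.card F = 2 ^ (2 * m)) : #(fixed F m) = 2 ^ m := by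
  have hle : #(fixed F m) ≤ 2 ^ m := by
    simpa only [fixed, sub_eq_zero] using card_filter_pow_sub_eq_le hm (0 : F)
  -- `y ↦ y ^ 2 ^ m - y` maps `F` into `fixed F m` with fibres of size at most `2 ^ m`
  have hmaps : ∀ y ∈ (univ : Finset F), y ^ 2 ^ m - y ∈ fixed F m := by
    intro y _
    rw [mem_fixed, sub_pow_char_pow, ← pow_mul, ← pow_add, ← two_mul,
      pow_two_pow_two_mul hF, CharTwo.sub_eq_add, CharTwo.sub_eq_add, add_comm]
  have hge := card_le_mul_card_image_of_maps_to hmaps (2 ^ m)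
    fun c _ => by simpa using card_filter_pow_sub_eq_le hm c
  rw [card_univ, hF, two_mul, pow_add] at hge
  have := le_of_mul_le_mul_left hge (by positivity)
  omega

lemma exists_traceSum_ne_zero (hm : m ≠ 0) (hF : Fintype.card F = 2 ^ (2 * m)) :
    ∃ v ∈ fixed F m, traceSum m v ≠ 0 := by
  by_contra! h
  set Q : F[X] := ∑ i ∈ range m, X ^ 2 ^ i
  have hdeg : Q.natDegree < #(fixed F m) := by
    rw [card_fixed hm hF]
    refine (natDegree_sum_le_of_forall_le _ _ fun i hi => ?_).trans_lt
      (Nat.pow_lt_pow_right one_lt_two (Nat.sub_one_lt hm))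
    rw [natDegree_X_pow]
    exact Nat.pow_le_pow_right two_pos (Nat.le_sub_one_of_lt (mem_range.1 hi))
  have hQ : Q = 0 := eq_zero_of_natDegree_lt_card_of_eval_eq_zero' Q (fixed F m)
    (fun v hv => by simpa [Q, eval_finsetSum, traceSum] using h v hv) hdeg
  have hcoeff : Q.coeff 1 = 1 := by
    simp [Q, coeff_X_pow, eq_comm (a := 1), Nat.pos_of_ne_zero hm]
  simp [hQ] at hcoeff

lemma sum_bitSign_traceSum_mul (hm : m ≠ 0) (hF : Fintype.card F = 2 ^ (2 * m)) {w : F}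
    (hw : w ∈ fixed F m) :
    ∑ y ∈ fixed F m, bitSign (traceSum m (y * w)) = if w = 0 then 2 ^ m else 0 := by
  split_ifs with hw0
  · simp [hw0, traceSum_zero, bitSign, card_fixed hm hF]
  obtain ⟨v, hv, hv0⟩ := exists_traceSum_ne_zero hm hF
  have hy₀ : v * w⁻¹ ∈ fixed F m := mul_mem_fixed hv (inv_mem_fixed hw)
  have htr : traceSum m (v * w⁻¹ * w) = 1 := by
    rw [inv_mul_cancel_right₀ hw0]
    exact (traceSum_eq_zero_or_one (mem_fixed.1 hv)).resolve_left hv0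
  -- translating by `v * w⁻¹` permutes `fixed F m` and flips every sign
  have h := sum_equiv (Equiv.addRight (v * w⁻¹)) (s := fixed F m) (t := fixed F m)
    (f := fun y => -bitSign (traceSum m (y * w))) (g := fun y => bitSign (traceSum m (y * w)))
    (fun y => by rw [Equiv.coe_addRight, mem_fixed, mem_fixed, add_pow_char_pow,
      mem_fixed.1 hy₀, add_left_inj])
    (fun y hy => by
      rw [Equiv.coe_addRight, add_mul, traceSum_add, htr,
        bitSign_add_one (traceSum_eq_zero_or_one (mem_fixed.1 (mul_mem_fixed hy hw)))])
  rw [sum_neg_distrib] at h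
  linarith

noncomputable def normSqrt (m : ℕ) (x : F) : F := (frobeniusEquiv F 2).symm (x ^ (2 ^ m + 1))

lemma normSqrt_sq (x : F) : normSqrt m x ^ 2 = x ^ (2 ^ m + 1) :=
  frobenius_apply_frobeniusEquiv_symm F 2 _

lemma normSqrt_ne_zero {x : F} (hx : x ≠ 0) : normSqrt m x ≠ 0 := by
  simpa [normSqrt] using hx

lemma normSqrt_mem_fixed (hF : Fintype.card F = 2 ^ (2 * m)) (x : F) :
    normSqrt m x ∈ fixed F m := by
  rw [mem_fixed, normSqrt, ← map_pow, mem_fixed.1 (pow_add_one_mem_fixed hF x)]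

lemma normSqrt_mul {y z : F} (hy : y ∈ fixed F m) (hz : z ∈ circle F m) :
    normSqrt m (y * z) = y := by
  rw [normSqrt, mul_pow_add_one hy hz, ← frobenius_def, frobeniusEquiv_symm_apply_frobenius]

lemma div_normSqrt_mem_circle (hF : Fintype.card F = 2 ^ (2 * m)) {x : F} (hx : x ≠ 0) :
    x / normSqrt m x ∈ circle F m := by
  rw [mem_circle, div_pow, mem_fixed.1 (normSqrt_mem_fixed hF x), div_mul_div_comm, ← pow_succ',
    ← sq, normSqrt_sq, div_self (pow_ne_zero _ hx)]

/-- Polar decomposition: `x ↦ (normSqrt m x, x / normSqrt m x)` inverts `(y, z) ↦ y * z`. -/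
lemma sum_eq_add_sum_circle_sum_fixed {M : Type*} [AddCommMonoid M]
    (hF : Fintype.card F = 2 ^ (2 * m)) (f : F → M) :
    ∑ x, f x = f 0 + ∑ z ∈ circle F m, ∑ y ∈ (fixed F m).erase 0, f (y * z) := by
  rw [← add_sum_erase univ f (mem_univ 0), sum_comm, ← sum_product']
  congr 1
  refine sum_nbij' (fun x => (normSqrt m x, x / normSqrt m x)) (fun p => p.1 * p.2)
    (fun x hx => ?_) (fun p hp => ?_) (fun x hx => ?_) (fun p hp => ?_) (fun x hx => ?_)
  · have hx0 := ne_of_mem_erase hx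
    simp only [mem_product, mem_erase]
    exact ⟨⟨normSqrt_ne_zero hx0, normSqrt_mem_fixed hF x⟩, div_normSqrt_mem_circle hF hx0⟩
  · simp only [mem_product, mem_erase] at hp
    exact mem_erase.2 ⟨mul_ne_zero hp.1.1 (ne_zero_of_mem_circle hp.2), mem_univ _⟩
  · exact mul_div_cancel₀ _ (normSqrt_ne_zero (ne_of_mem_erase hx))
  · simp only [mem_product, mem_erase] at hp
    rw [normSqrt_mul hp.1.2 hp.2, mul_div_cancel_left₀ _ hp.1.1]
  · rw [mul_div_cancel₀ _ (normSqrt_ne_zero (ne_of_mem_erase hx))]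

lemma card_circle (hm : m ≠ 0) (hF : Fintype.card F = 2 ^ (2 * m)) :
    #(circle F m) = 2 ^ m + 1 := by
  have h := sum_eq_add_sum_circle_sum_fixed hF fun _ => (1 : ℤ)
  simp only [sum_const, card_univ, hF, card_erase_of_mem zero_mem_fixed, card_fixed hm hF,
    nsmul_eq_mul, mul_one] at h
  have hk : 2 ≤ 2 ^ m := Nat.le_self_pow hm 2
  have hk' : ((2 : ℤ) ^ m - 1) ≠ 0 := by
    have : (2 : ℤ) ≤ 2 ^ m := by exact_mod_cast hk
    linarith
  rw [Nat.cast_sub (by omega), pow_mul'] at h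
  push_cast at h
  have hc : (#(circle F m) : ℤ) * (2 ^ m - 1) = (2 ^ m + 1) * (2 ^ m - 1) := by
    linear_combination -h
  exact_mod_cast mul_right_cancel₀ hk' hc

lemma traceSum_add_traceSum_eq {b r u y : F} (hy : y ∈ fixed F m) (hr : r ∈ fixed F m)
    (hu : u ^ 2 ^ m = u⁻¹) :
    traceSum m (r ^ 2 * y ^ 2) + traceSum (2 * m) (b * (y * u⁻¹)) =
      traceSum m (y * (r + b * u⁻¹ + b ^ 2 ^ m * u)) := by
  rw [← mul_pow, traceSum_sq, traceSum_sq_of_pow_eq (mem_fixed.1 (mul_mem_fixed hr hy)),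
    traceSum_two_mul, ← traceSum_add, ← traceSum_add, mul_pow, mul_pow, inv_pow, hu, inv_inv,
    mem_fixed.1 hy]
  ring_nf

lemma add_mul_inv_add_mem_fixed (hF : Fintype.card F = 2 ^ (2 * m)) {b r u : F}
    (hr : r ∈ fixed F m) (hu : u ^ 2 ^ m = u⁻¹) : r + b * u⁻¹ + b ^ 2 ^ m * u ∈ fixed F m := by
  rw [mem_fixed, add_pow_char_pow, add_pow_char_pow, mul_pow, mul_pow, inv_pow, hu, inv_inv,
    ← pow_mul, ← pow_add, ← two_mul, pow_two_pow_two_mul hF, mem_fixed.1 hr]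
  ring

lemma sum_erase_zero_bitSign_eq (hm : m ≠ 0) (hF : Fintype.card F = 2 ^ (2 * m)) {a r : F}
    (ha : a ^ 2 ^ m = a) (hr : r ^ 2 = a) (b : F) (s : ℕ) {z : F} (hz : z ∈ circle F m) :
    ∑ y ∈ (fixed F m).erase 0, bitSign (traceSum m (a * (y * z) ^ (2 ^ m + 1)) +
        traceSum (2 * m) (b * (y * z) ^ (s * (2 ^ m - 1) + 1))) =
      (if b ^ 2 ^ m * z ^ (2 * (2 * (s : ℤ) - 1)) + r * z ^ (2 * (s : ℤ) - 1) + b = 0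
        then 2 ^ m else 0) - 1 := by
  set u := z ^ (2 * (s : ℤ) - 1)
  have hu := zpow_pow_two_pow_of_mem_circle hz (2 * s - 1)
  have hr' : r ∈ fixed F m := mem_fixed_of_sq_mem (hr ▸ mem_fixed.2 ha)
  have hsummand : ∀ y ∈ (fixed F m).erase 0,
      bitSign (traceSum m (a * (y * z) ^ (2 ^ m + 1)) +
        traceSum (2 * m) (b * (y * z) ^ (s * (2 ^ m - 1) + 1))) =
      bitSign (traceSum m (y * (r + b * u⁻¹ + b ^ 2 ^ m * u))) := by
    intro y hy
    obtain ⟨hy0, hy⟩ := mem_erase.1 hy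
    rw [mul_pow_add_one hy hz, mul_pow, pow_mul_sub_one_add_one_of_mem_fixed hy hy0,
      pow_mul_sub_one_add_one_of_mem_circle hz, ← hr, traceSum_add_traceSum_eq hy hr' hu]
  rw [sum_congr rfl hsummand, sum_erase_eq_sub zero_mem_fixed,
    sum_bitSign_traceSum_mul hm hF (add_mul_inv_add_mem_fixed hF hr' hu), zero_mul, traceSum_zero,
    zpow_mul', zpow_ofNat, quadratic_eq_zero_iff (zpow_ne_zero _ (ne_zero_of_mem_circle hz))]
  simp [bitSign]

theorem sum_bitSign_eq (hm : m ≠ 0) (hF : Fintype.card F = 2 ^ (2 * m)) {a r : F}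
    (ha : a ^ 2 ^ m = a) (hr : r ^ 2 = a) (b : F) (s : ℕ) :
    ∑ x, bitSign (traceSum m (a * x ^ (2 ^ m + 1)) +
        traceSum (2 * m) (b * x ^ (s * (2 ^ m - 1) + 1))) =
      (#{z ∈ circle F m | b ^ 2 ^ m * z ^ (2 * (2 * (s : ℤ) - 1)) + r * z ^ (2 * (s : ℤ) - 1) +
        b = 0} - 1) * 2 ^ m := by
  rw [sum_eq_add_sum_circle_sum_fixed hF,
    sum_congr rfl fun z hz => sum_erase_zero_bitSign_eq hm hF ha hr b s hz, sum_sub_distrib,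
    ← sum_filter, sum_const, sum_const, card_circle hm hF]
  simp [bitSign, traceSum_zero]
  ring

end

end Niho

/-- Niho's lemma, part 1: for `q = 2^{2m}`, `a ∈ F_{2^m}` (encoded as
`a^{2^m} = a`), `b ∈ F_q`, and `d₂ = s₂(2^m-1)+1`, the sum
`S(a,b) = Σ_{x∈F_q} (-1)^{tr_m(a x^{2^m+1}) + Tr_n(b x^{d₂})}` equals
`(U(a,b) - 1)·2^m`, where `U(a,b)` is the number of `z ∈ S = {z : z·z^{2^m} = 1}`
with `b̄ z^{2(2s₂-1)} + a^{1/2} z^{2s₂-1} + b = 0`, and `a^{1/2}` (here `r`) is the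
unique square root of `a`.  The traces `tr_m` and `Tr_n` are computed as
`Σ_{i<m} y^{2^i}` and `Σ_{i<2m} y^{2^i}` (values in the prime field `{0,1} ⊆ F_q`),
and `(-1)^ε` is `1` if `ε = 0` and `-1` if `ε = 1`. -/
theorem stmt_16 (m s2 : ℕ) (hm : 0 < m) (a b : GaloisField 2 (2 * m))
    (ha : a ^ (2 ^ m) = a) (r : GaloisField 2 (2 * m)) (hr : r ^ 2 = a) :
    (∑ x : GaloisField 2 (2 * m),
        if (∑ i ∈ Finset.range m, (a * x ^ (2 ^ m + 1)) ^ (2 ^ i)) +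
            (∑ i ∈ Finset.range (2 * m),
              (b * x ^ (s2 * (2 ^ m - 1) + 1)) ^ (2 ^ i)) = 0
        then (1 : ℤ) else -1) =
    ((Nat.card {z : GaloisField 2 (2 * m) // z * z ^ (2 ^ m) = 1 ∧
        b ^ (2 ^ m) * z ^ (2 * (2 * (s2 : ℤ) - 1)) +
          r * z ^ (2 * (s2 : ℤ) - 1) + b = 0} : ℤ) - 1) * 2 ^ m := by
  have hF : Fintype.card (GaloisField 2 (2 * m)) = 2 ^ (2 * m) := by
    rw [← Nat.card_eq_fintype_card]
    exact GaloisField.card 2 (2 * m) (by omega)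
  rw [Nat.card_eq_fintype_card, Fintype.card_subtype, ← Finset.filter_filter]
  exact Niho.sum_bitSign_eq hm.ne' hF ha hr b s2
end

section
/- Let p = 2, m ≥ 1, n = 2m, q = 2^n, and d_2 = s_2(2^m-1)+1 with s_2 not ≡ 2^{-1} (mod 2^m+1). Set l = gcd(2 s_2 - 1, 2^m + 1). Then for every (a,b) in F_{2^m} × F_q with (a,b) ≠ (0,0), the sum S(a,b) = Σ_{x in F_q} (-1)^{tr_m(a x^{2^m+1}) + Tr_n(b x^{d_2})} takes a value in the set { -2^m, (l-1) 2^m, (2l-1) 2^m }. -/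
attribute [local instance] Classical.propDecidable

/-!
Write `Q = 2^m`, `e = 2 s₂ - 1` and `r = √a ∈ 𝔽_Q`. As `Q - 1` and `Q + 1` are coprime, every
`x ≠ 0` factors uniquely as `x = y u` with `y ∈ 𝔽_Q^*` and `u^(Q+1) = 1`. Then `x^(Q+1) = y²` and
`x^d₂ = y (u^e)^Q`, so the exponent of `-1` in `S(a,b)` becomes `tr_m (y c(u^e))` with
`c(w) = r + b w^Q + b^Q w ∈ 𝔽_Q`. Summing over `y` first gives `S(a,b) = (N - 1) Q`, where `N`
counts the `u` with `c(u^e) = 0`. For `w^(Q+1) = 1` one has `w c(w) = b^Q w² + r w + b`, a nonzero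
polynomial of degree at most two, and each of its roots equals `u^e` for either no `u` or exactly
`l = gcd(e, Q+1)` of them; hence `N ∈ {0, l, 2l}`.
-/

open Finset Polynomial

namespace BinaryExpSum

variable {F : Type*} [Field F]

theorem pow_eq_self_iff {n : ℕ} (hn : 0 < n) {y : F} :
    y ^ n = y ↔ y = 0 ∨ y ^ (n - 1) = 1 := by
  rw [← Nat.sub_add_cancel hn, pow_succ, Nat.add_sub_cancel]
  conv_lhs => rhs; rw [← one_mul y]
  rw [mul_eq_mul_right_iff, or_comm]

theorem pow_mul_pred_add_one_eq_self {n : ℕ} (hn : 0 < n) {y : F} (hy : y ^ n = y) (k : ℕ) :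
    y ^ (k * (n - 1) + 1) = y := by
  induction k with
  | zero => simp
  | succ k ih =>
    rw [show (k + 1) * (n - 1) + 1 = k * (n - 1) + 1 + (n - 1) by ring, pow_add, ih, ← pow_succ',
      Nat.sub_add_cancel hn, hy]

theorem pow_eq_pow_two_mul_sub_one_pow {Q s : ℕ} (hQ : 0 < Q) (hs : 0 < s) {u : F}
    (hu : u ^ (Q + 1) = 1) : u ^ (s * (Q - 1) + 1) = (u ^ (2 * s - 1)) ^ Q := by
  obtain ⟨t, rfl⟩ : ∃ t, s = t + 1 := ⟨s - 1, by omega⟩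
  obtain ⟨P, rfl⟩ : ∃ P, Q = P + 1 := ⟨Q - 1, by omega⟩
  have hexp : (2 * (t + 1) - 1) * (P + 1) = (t + 1) * (P + 1 - 1) + 1 + t * (P + 1 + 1) := by
    simp only [Nat.add_sub_cancel, show 2 * (t + 1) - 1 = 2 * t + 1 by omega]
    ring
  rw [← pow_mul, hexp, pow_add _ _ (t * _), mul_comm t, pow_mul, hu, one_pow, mul_one]

theorem exists_sq_eq_of_pow_two_pow_eq_self {m : ℕ} (hm : 0 < m) {a : F} (ha : a ^ 2 ^ m = a) :
    ∃ r : F, r ^ 2 = a ∧ r ^ 2 ^ m = r := by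
  refine ⟨a ^ 2 ^ (m - 1), ?_, by rw [pow_right_comm, ha]⟩
  rw [← pow_mul, ← pow_succ, Nat.sub_add_cancel hm, ha]

theorem ne_zero_of_mem_nthRootsFinset_one {n : ℕ} {u : F} (hu : u ∈ nthRootsFinset n (1 : F)) :
    u ≠ 0 := by
  rintro rfl
  have hn : 0 < n := Nat.pos_of_ne_zero fun h => by simp [h] at hu
  simp [mem_nthRootsFinset hn, hn.ne'] at hu

theorem card_filter_pow_eq_pow {n : ℕ} (e : ℕ) {u₀ : F}
    (hu₀ : u₀ ∈ nthRootsFinset n (1 : F)) :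
    #{u ∈ nthRootsFinset n (1 : F) | u ^ e = u₀ ^ e} = #(nthRootsFinset (e.gcd n) (1 : F)) := by
  have hn : 0 < n := Nat.pos_of_ne_zero fun h => by simp [h] at hu₀
  have hu₀ne := ne_zero_of_mem_nthRootsFinset_one hu₀
  rw [mem_nthRootsFinset hn] at hu₀
  refine card_bij' (fun u _ => u / u₀) (fun t _ => u₀ * t) (fun u hu => ?_) (fun t ht => ?_)
    (fun u _ => by field_simp) (fun t _ => by field_simp)
  · rw [mem_filter, mem_nthRootsFinset hn] at hu
    rw [mem_nthRootsFinset (Nat.gcd_pos_of_pos_right e hn), pow_gcd_eq_one, div_pow, div_pow,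
      hu.1, hu.2, hu₀, div_self (pow_ne_zero _ hu₀ne)]
    simp
  · rw [mem_nthRootsFinset (Nat.gcd_pos_of_pos_right e hn), pow_gcd_eq_one] at ht
    rw [mem_filter, mem_nthRootsFinset hn, mul_pow, mul_pow, hu₀, ht.1, ht.2]
    simp

/-- On the subfield `𝔽_{2^m}`, the absolute trace `tr_m`. -/
def frobTrace (m : ℕ) (z : F) : F := ∑ i ∈ range m, z ^ 2 ^ i

/-- For `card F = 2^(2m)`, the trace from `F` to `𝔽_{2^m}`. -/
def relTrace (m : ℕ) (z : F) : F := z + z ^ 2 ^ m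

noncomputable def signOf (t : F) : ℤ := if t = 0 then 1 else -1

theorem frobTrace_zero (m : ℕ) : frobTrace m (0 : F) = 0 := by
  simp [frobTrace]

theorem frobTrace_sq {m : ℕ} {z : F} (hz : z ^ 2 ^ m = z) :
    frobTrace m (z ^ 2) = frobTrace m z := by
  have hshift := (sum_range_succ' (fun i => z ^ 2 ^ i) m).symm.trans (sum_range_succ _ m)
  simp only [pow_zero, pow_one, hz] at hshift
  simp only [frobTrace, ← pow_mul, ← pow_succ']
  exact add_right_cancel hshift

theorem relTrace_mul_of_pow_eq_self {m : ℕ} {y : F} (hy : y ^ 2 ^ m = y) (z : F) :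
    relTrace m (y * z) = y * relTrace m z := by
  rw [relTrace, relTrace, mul_pow, hy, mul_add]

theorem signOf_zero : signOf (0 : F) = 1 := if_pos rfl

theorem two_pow_sub_one_mul_two_pow_add_one (m : ℕ) :
    (2 ^ m - 1) * (2 ^ m + 1) = 2 ^ (2 * m) - 1 := by
  rw [mul_comm, ← Nat.sq_sub_sq, one_pow, ← pow_mul, mul_comm]

theorem coprime_two_pow_sub_one_two_pow_add_one {m : ℕ} (hm : 0 < m) :
    (2 ^ m - 1).Coprime (2 ^ m + 1) := by
  have h : 2 ^ m + 1 = 2 + (2 ^ m - 1) := by have := Nat.one_le_two_pow (n := m); omega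
  rw [h, Nat.coprime_add_self_right, Nat.coprime_two_right]
  exact Nat.Even.sub_odd Nat.one_le_two_pow ((Nat.even_pow' hm.ne').2 even_two) odd_one

section CharTwo

variable [CharP F 2]

theorem frobTrace_add (m : ℕ) (x y : F) :
    frobTrace m (x + y) = frobTrace m x + frobTrace m y := by
  simp only [frobTrace, ← sum_add_distrib, add_pow_char_pow]

theorem sq_frobTrace (m : ℕ) (z : F) : frobTrace m z ^ 2 = frobTrace m (z ^ 2) := by
  simp only [frobTrace, sum_pow_char, ← pow_mul, mul_comm]

theorem frobTrace_eq_zero_or_one {m : ℕ} {z : F} (hz : z ^ 2 ^ m = z) :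
    frobTrace m z = 0 ∨ frobTrace m z = 1 := by
  have h : frobTrace m z * (frobTrace m z - 1) = 0 := by
    rw [mul_sub, mul_one, ← sq, sq_frobTrace, frobTrace_sq hz, sub_self]
  simpa [sub_eq_zero] using h

theorem frobTrace_two_mul (m : ℕ) (z : F) :
    frobTrace (2 * m) z = frobTrace m (relTrace m z) := by
  rw [relTrace, frobTrace_add]
  simp only [frobTrace, two_mul, sum_range_add, ← pow_mul, ← pow_add]

theorem signOf_add_one {t : F} (ht : t = 0 ∨ t = 1) : signOf (t + 1) = -signOf t := by
  rcases ht with rfl | rfl <;> simp [signOf, CharTwo.add_self_eq_zero]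

theorem frobTrace_add_frobTrace_eq {m s : ℕ} (hs : 0 < s) {a b r y u : F} (hr : r ^ 2 = a)
    (hrQ : r ^ 2 ^ m = r) (hy : y ^ 2 ^ m = y) (hu : u ^ (2 ^ m + 1) = 1) :
    frobTrace m (a * (y * u) ^ (2 ^ m + 1)) +
        frobTrace (2 * m) (b * (y * u) ^ (s * (2 ^ m - 1) + 1)) =
      frobTrace m (y * (r + relTrace m (b * (u ^ (2 * s - 1)) ^ 2 ^ m))) := by
  have h₁ : (y * u) ^ (2 ^ m + 1) = y ^ 2 := by rw [mul_pow, hu, mul_one, pow_succ, hy, sq]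
  have h₂ : (y * u) ^ (s * (2 ^ m - 1) + 1) = y * (u ^ (2 * s - 1)) ^ 2 ^ m := by
    rw [mul_pow, pow_mul_pred_add_one_eq_self (Nat.two_pow_pos m) hy,
      pow_eq_pow_two_mul_sub_one_pow (Nat.two_pow_pos m) hs hu]
  rw [h₁, h₂, ← hr, ← mul_pow, frobTrace_sq (by rw [mul_pow, hrQ, hy]), frobTrace_two_mul,
    mul_left_comm b y, relTrace_mul_of_pow_eq_self hy, ← frobTrace_add, mul_add, mul_comm r y]

end CharTwo

section FiniteField

variable [Fintype F]

theorem card_nthRootsFinset_one_of_dvd {k : ℕ} (hk : k ∣ Fintype.card F - 1) :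
    #(nthRootsFinset k (1 : F)) = k := by
  obtain ⟨g, hg⟩ := IsCyclic.exists_ofOrder_eq_natCard (α := Fˣ)
  rw [Nat.card_eq_fintype_card, Fintype.card_units] at hg
  have hF : Fintype.card F - 1 ≠ 0 := by have := Fintype.one_lt_card (α := F); omega
  have hord : orderOf (g ^ (orderOf g / k)) = k := orderOf_pow_orderOf_div (hg ▸ hF) (hg ▸ hk)
  exact (IsPrimitiveRoot.coe_units_iff.2 (hord ▸ IsPrimitiveRoot.orderOf _)).card_nthRootsFinset

theorem sum_erase_zero_eq_sum_nthRootsFinset_mul {M : Type*} [AddCommMonoid M] {n₁ n₂ : ℕ}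
    (hcop : n₁.Coprime n₂) (hcard : n₁ * n₂ = Fintype.card F - 1) (f : F → M) :
    ∑ x ∈ univ.erase 0, f x =
      ∑ y ∈ nthRootsFinset n₁ (1 : F), ∑ u ∈ nthRootsFinset n₂ (1 : F), f (y * u) := by
  have hF : Fintype.card F - 1 ≠ 0 := by have := Fintype.one_lt_card (α := F); omega
  have hn₁ : 0 < n₁ := Nat.pos_of_ne_zero fun h => by simp [h] at hcard; omega
  have hn₂ : 0 < n₂ := Nat.pos_of_ne_zero fun h => by simp [h] at hcard; omega
  have hinj : Set.InjOn (fun p : F × F => p.1 * p.2)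
      (nthRootsFinset n₁ (1 : F) ×ˢ nthRootsFinset n₂ (1 : F) : Finset _) := by
    rintro ⟨y₁, u₁⟩ h₁ ⟨y₂, u₂⟩ h₂ (h : y₁ * u₁ = y₂ * u₂)
    simp only [coe_product, Set.mem_prod, mem_coe] at h₁ h₂
    have hy₂ := ne_zero_of_mem_nthRootsFinset_one h₂.1
    have hu₁ := ne_zero_of_mem_nthRootsFinset_one h₁.2
    rw [mem_nthRootsFinset hn₁, mem_nthRootsFinset hn₂] at h₁ h₂
    have hquot : y₁ / y₂ = u₂ / u₁ := by field_simp; linear_combination h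
    have hone : y₁ / y₂ = 1 := (pow_eq_one_iff_of_coprime hcop).1
      ⟨by rw [div_pow, h₁.1, h₂.1, div_one],
        by rw [hquot, div_pow, h₁.2, h₂.2, div_one]⟩
    have hy : y₁ = y₂ := (div_eq_one_iff_eq hy₂).1 hone
    subst hy
    simp [mul_left_cancel₀ hy₂ h]
  have himage : (nthRootsFinset n₁ (1 : F) ×ˢ nthRootsFinset n₂ (1 : F)).image
      (fun p => p.1 * p.2) = univ.erase 0 := by
    refine eq_of_subset_of_card_le (fun x hx => ?_) ?_
    · obtain ⟨⟨y, u⟩, hyu, rfl⟩ := mem_image.1 hx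
      rw [mem_product] at hyu
      exact mem_erase.2 ⟨mul_ne_zero (ne_zero_of_mem_nthRootsFinset_one hyu.1)
        (ne_zero_of_mem_nthRootsFinset_one hyu.2), mem_univ _⟩
    · rw [card_image_of_injOn hinj, card_product,
        card_nthRootsFinset_one_of_dvd (Dvd.intro _ hcard),
        card_nthRootsFinset_one_of_dvd (Dvd.intro_left _ hcard), hcard,
        card_erase_of_mem (mem_univ _), card_univ]
  rw [← himage, sum_image hinj, sum_product]

theorem exists_card_filter_pow_mem_eq_gcd_mul {n : ℕ} (e : ℕ)
    (hn : n ∣ Fintype.card F - 1) (V : Finset F) :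
    ∃ k ≤ #V, #{u ∈ nthRootsFinset n (1 : F) | u ^ e ∈ V} = e.gcd n * k := by
  refine ⟨#{v ∈ V | ∃ u ∈ nthRootsFinset n (1 : F), u ^ e = v}, card_filter_le _ _, ?_⟩
  have hfiber : ∀ v ∈ V, #{u ∈ {u ∈ nthRootsFinset n (1 : F) | u ^ e ∈ V} | u ^ e = v} =
      if ∃ u ∈ nthRootsFinset n (1 : F), u ^ e = v then e.gcd n else 0 := by
    intro v hv
    rw [filter_filter]
    split_ifs with h
    · obtain ⟨u₀, hu₀, rfl⟩ := h
      rw [← card_nthRootsFinset_one_of_dvd ((Nat.gcd_dvd_right e n).trans hn),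
        ← card_filter_pow_eq_pow e hu₀]
      congr 1
      exact filter_congr fun u _ => and_iff_right_of_imp fun h => h ▸ hv
    · exact card_eq_zero.2 (filter_eq_empty_iff.2 fun u hu h' => h ⟨u, hu, h'.2⟩)
  rw [card_eq_sum_card_fiberwise (s := {u ∈ nthRootsFinset n (1 : F) | u ^ e ∈ V}) (t := V)
      (f := (· ^ e)) fun u hu => (mem_filter.1 hu).2, sum_congr rfl hfiber,
    sum_ite, sum_const_zero, add_zero, sum_const, smul_eq_mul, mul_comm]

noncomputable def fixedByPow (Q : ℕ) : Finset F := {y | y ^ Q = y}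

@[simp]
theorem mem_fixedByPow {Q : ℕ} {y : F} : y ∈ fixedByPow Q ↔ y ^ Q = y := by
  simp [fixedByPow]

theorem nthRootsFinset_pred_eq_erase {n : ℕ} (hn : 1 < n) :
    nthRootsFinset (n - 1) (1 : F) = (fixedByPow n).erase 0 := by
  ext y
  rw [mem_nthRootsFinset (by omega), mem_erase, mem_fixedByPow, pow_eq_self_iff (by omega)]
  constructor
  · intro h
    exact ⟨fun hy => by simp [hy, show n - 1 ≠ 0 by omega] at h, Or.inr h⟩
  · rintro ⟨hy, h⟩
    exact h.resolve_left hy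

theorem card_fixedByPow {Q : ℕ} (hQ : 1 < Q) (hcard : Fintype.card F = Q ^ 2) :
    #(fixedByPow Q : Finset F) = Q := by
  have hdvd : Q - 1 ∣ Fintype.card F - 1 := by
    rw [hcard, ← one_pow 2, Nat.sq_sub_sq]
    exact Dvd.intro_left _ rfl
  have h0 : (0 : F) ∈ fixedByPow Q := by simp [zero_pow (by omega : Q ≠ 0)]
  have h := card_nthRootsFinset_one_of_dvd hdvd
  rw [nthRootsFinset_pred_eq_erase hQ, card_erase_of_mem h0] at h
  have := card_pos.2 ⟨0, h0⟩
  omega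

theorem exists_frobTrace_eq_one [CharP F 2] {m : ℕ} (hm : 0 < m)
    (hK : #(fixedByPow (2 ^ m) : Finset F) = 2 ^ m) :
    ∃ z : F, z ^ 2 ^ m = z ∧ frobTrace m z = 1 := by
  by_contra! htr
  -- otherwise all `2^m` elements of `𝔽_{2^m}` would be roots of a polynomial of degree `2^(m-1)`
  set P : F[X] := ∑ i ∈ range m, X ^ 2 ^ i
  have hP1 : P.coeff 1 = 1 := by
    rw [finsetSum_coeff, sum_eq_single_of_mem 0 (mem_range.2 hm) fun i _ hi => ?_]
    · simp
    · have : 1 < 2 ^ i := Nat.one_lt_two_pow hi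
      simp [coeff_X_pow, this.ne]
  have hP : P ≠ 0 := fun h => by simp [h] at hP1
  have hdeg : P.natDegree ≤ 2 ^ (m - 1) := natDegree_sum_le_of_forall_le _ _ fun i hi => by
    rw [natDegree_X_pow]
    exact Nat.pow_le_pow_right two_pos (by rw [mem_range] at hi; omega)
  have hroots : ((fixedByPow (2 ^ m) : Finset F).val ⊆ P.roots) := fun z hz => by
    rw [mem_val, mem_fixedByPow] at hz
    rw [mem_roots hP, IsRoot, show P.eval z = frobTrace m z by simp [P, frobTrace, eval_finsetSum]]
    exact (frobTrace_eq_zero_or_one hz).resolve_right (htr z hz)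
  have := (card_le_degree_of_subset_roots hroots).trans hdeg
  rw [hK] at this
  exact absurd this (not_le.2 (Nat.pow_lt_pow_right one_lt_two (by omega)))

theorem sum_signOf_frobTrace_eq_zero [CharP F 2] {m : ℕ} (hm : 0 < m)
    (hK : #(fixedByPow (2 ^ m) : Finset F) = 2 ^ m) :
    ∑ z ∈ (fixedByPow (2 ^ m) : Finset F), signOf (frobTrace m z) = 0 := by
  -- translating by an element of trace one flips every sign
  obtain ⟨z₀, hz₀, htr⟩ := exists_frobTrace_eq_one hm hK
  have hmem : ∀ z ∈ (fixedByPow (2 ^ m) : Finset F), z + z₀ ∈ fixedByPow (2 ^ m) :=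
    fun z hz => by
      rw [mem_fixedByPow] at hz ⊢
      rw [add_pow_char_pow, hz, hz₀]
  have hinv : ∀ z : F, z + z₀ + z₀ = z := fun z => by
    rw [add_assoc, CharTwo.add_self_eq_zero, add_zero]
  have hneg : ∑ z ∈ (fixedByPow (2 ^ m) : Finset F), signOf (frobTrace m z) =
      -∑ z ∈ (fixedByPow (2 ^ m) : Finset F), signOf (frobTrace m z) := by
    rw [← sum_neg_distrib]
    refine sum_nbij' (· + z₀) (· + z₀) hmem hmem (fun z _ => hinv z) (fun z _ => hinv z)
      fun z hz => ?_
    rw [frobTrace_add, htr, signOf_add_one (frobTrace_eq_zero_or_one (mem_fixedByPow.1 hz)),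
      neg_neg]
  linarith

theorem sum_nthRootsFinset_signOf_frobTrace_mul [CharP F 2] {m : ℕ} (hm : 0 < m)
    (hK : #(fixedByPow (2 ^ m) : Finset F) = 2 ^ m) {g : F} (hg : g ^ 2 ^ m = g) :
    ∑ y ∈ nthRootsFinset (2 ^ m - 1) (1 : F), signOf (frobTrace m (y * g)) =
      if g = 0 then 2 ^ m - 1 else -1 := by
  have h0 : (0 : F) ∈ fixedByPow (2 ^ m) := by simp
  rw [nthRootsFinset_pred_eq_erase (Nat.one_lt_two_pow hm.ne'), sum_erase_eq_sub h0, zero_mul,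
    frobTrace_zero, signOf_zero]
  split_ifs with hg0
  · simp [hg0, frobTrace_zero, signOf_zero, hK]
  · have hmem : ∀ c : F, c ^ 2 ^ m = c →
        ∀ y ∈ (fixedByPow (2 ^ m) : Finset F), y * c ∈ (fixedByPow (2 ^ m) : Finset F) :=
      fun c hc y hy => by rw [mem_fixedByPow] at hy ⊢; rw [mul_pow, hy, hc]
    have hscale : ∑ y ∈ (fixedByPow (2 ^ m) : Finset F), signOf (frobTrace m (y * g)) =
        ∑ z ∈ (fixedByPow (2 ^ m) : Finset F), signOf (frobTrace m z) :=
      sum_nbij' (· * g) (· * g⁻¹) (hmem g hg) (hmem g⁻¹ (by rw [inv_pow, hg]))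
        (fun y _ => by field_simp) (fun y _ => by field_simp) fun y _ => rfl
    rw [hscale, sum_signOf_frobTrace_eq_zero hm hK, zero_sub]

theorem pow_two_pow_pow_two_pow {m : ℕ} (hcard : Fintype.card F = 2 ^ (2 * m)) (z : F) :
    (z ^ 2 ^ m) ^ 2 ^ m = z := by
  rw [← pow_mul, ← pow_add, ← two_mul, ← hcard, FiniteField.pow_card]

theorem relTrace_pow_two_pow [CharP F 2] {m : ℕ} (hcard : Fintype.card F = 2 ^ (2 * m)) (z : F) :
    relTrace m z ^ 2 ^ m = relTrace m z := by
  rw [relTrace, add_pow_char_pow, pow_two_pow_pow_two_pow hcard, add_comm]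

theorem sum_signOf_eq_card_sub_one_mul [CharP F 2] {m s : ℕ} (hm : 0 < m)
    (hcard : Fintype.card F = 2 ^ (2 * m)) (hs : 0 < s) {a b r : F} (hr : r ^ 2 = a)
    (hrQ : r ^ 2 ^ m = r) :
    ∑ x : F, signOf (frobTrace m (a * x ^ (2 ^ m + 1)) +
        frobTrace (2 * m) (b * x ^ (s * (2 ^ m - 1) + 1))) =
      (#{u ∈ nthRootsFinset (2 ^ m + 1) (1 : F) |
        r + relTrace m (b * (u ^ (2 * s - 1)) ^ 2 ^ m) = 0} - 1 : ℤ) * 2 ^ m := by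
  set U := nthRootsFinset (2 ^ m + 1) (1 : F)
  have hK : #(fixedByPow (2 ^ m) : Finset F) = 2 ^ m :=
    card_fixedByPow (Nat.one_lt_two_pow hm.ne') (by rw [hcard, pow_mul'])
  have hprod : (2 ^ m - 1) * (2 ^ m + 1) = Fintype.card F - 1 := by
    rw [hcard, two_pow_sub_one_mul_two_pow_add_one]
  have hU : #U = 2 ^ m + 1 := card_nthRootsFinset_one_of_dvd (Dvd.intro_left _ hprod)
  have hsplit := card_filter_add_card_filter_not (s := U)
    (fun u => r + relTrace m (b * (u ^ (2 * s - 1)) ^ 2 ^ m) = 0)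
  rw [← add_sum_erase _ _ (mem_univ 0), zero_pow (by positivity), zero_pow (by positivity),
    mul_zero, mul_zero, frobTrace_zero, frobTrace_zero, add_zero, signOf_zero,
    sum_erase_zero_eq_sum_nthRootsFinset_mul (coprime_two_pow_sub_one_two_pow_add_one hm) hprod,
    sum_comm]
  have hinner : ∀ u ∈ U, ∑ y ∈ nthRootsFinset (2 ^ m - 1) (1 : F),
      signOf (frobTrace m (a * (y * u) ^ (2 ^ m + 1)) +
        frobTrace (2 * m) (b * (y * u) ^ (s * (2 ^ m - 1) + 1))) =
      if r + relTrace m (b * (u ^ (2 * s - 1)) ^ 2 ^ m) = 0 then 2 ^ m - 1 else -1 := by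
    intro u hu
    rw [mem_nthRootsFinset (by positivity)] at hu
    rw [← sum_nthRootsFinset_signOf_frobTrace_mul hm hK
      (by rw [add_pow_char_pow, hrQ, relTrace_pow_two_pow hcard])]
    refine sum_congr rfl fun y hy => ?_
    rw [nthRootsFinset_pred_eq_erase (Nat.one_lt_two_pow hm.ne')] at hy
    rw [frobTrace_add_frobTrace_eq hs hr hrQ (mem_fixedByPow.1 (mem_of_mem_erase hy)) hu]
  rw [sum_congr rfl hinner, sum_ite, sum_const, sum_const, nsmul_eq_mul, nsmul_eq_mul]
  rw [hU] at hsplit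
  have hsplitZ := congrArg (Nat.cast : ℕ → ℤ) hsplit
  push_cast at hsplitZ
  linear_combination -hsplitZ

theorem exists_card_filter_eq_zero_eq_gcd_mul {m : ℕ} (hcard : Fintype.card F = 2 ^ (2 * m))
    (e : ℕ) {b r : F} (hrb : ¬(r = 0 ∧ b = 0)) :
    ∃ k ≤ 2, #{u ∈ nthRootsFinset (2 ^ m + 1) (1 : F) |
      r + relTrace m (b * (u ^ e) ^ 2 ^ m) = 0} = e.gcd (2 ^ m + 1) * k := by
  set P : F[X] := C (b ^ 2 ^ m) * X ^ 2 + C r * X + C b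
  have hP : P ≠ 0 := fun h => hrb
    ⟨by simpa [P, -map_pow, coeff_C_mul, coeff_X_pow] using congrArg (coeff · 1) h,
      by simpa [P, -map_pow, coeff_C_mul, coeff_X_pow] using congrArg (coeff · 0) h⟩
  have hroot : ∀ w : F, w ^ (2 ^ m + 1) = 1 →
      (r + relTrace m (b * w ^ 2 ^ m) = 0 ↔ w ∈ P.roots.toFinset) := by
    intro w hw
    have hw0 : w ≠ 0 := fun h => by simp [h] at hw
    have heval : P.eval w = w * (r + relTrace m (b * w ^ 2 ^ m)) := by
      simp only [P, relTrace, eval_add, eval_mul, eval_C, eval_pow, eval_X, mul_pow,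
        pow_two_pow_pow_two_pow hcard]
      linear_combination -b * hw
    rw [Multiset.mem_toFinset, mem_roots hP, IsRoot, heval, mul_eq_zero, or_iff_right hw0]
  have hdvd : 2 ^ m + 1 ∣ Fintype.card F - 1 := by
    rw [hcard, ← two_pow_sub_one_mul_two_pow_add_one]
    exact Dvd.intro_left _ rfl
  obtain ⟨k, hk, hN⟩ := exists_card_filter_pow_mem_eq_gcd_mul e hdvd P.roots.toFinset
  refine ⟨k, hk.trans ((Multiset.toFinset_card_le _).trans ((card_roots' P).trans
    (natDegree_quadratic_le))), ?_⟩
  rw [← hN]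
  refine congrArg card (filter_congr fun u hu => hroot _ ?_)
  rw [mem_nthRootsFinset (by positivity)] at hu
  rw [← pow_mul, mul_comm, pow_mul, hu, one_pow]

end FiniteField

end BinaryExpSum

open BinaryExpSum

theorem stmt_17_general (m s2 : ℕ) (hm : 0 < m) (hs2 : 1 ≤ s2)
    (a b : GaloisField 2 (2 * m)) (ha : a ^ (2 ^ m) = a)
    (hab : ¬ (a = 0 ∧ b = 0)) :
    (∑ x : GaloisField 2 (2 * m),
        if (∑ i ∈ Finset.range m, (a * x ^ (2 ^ m + 1)) ^ (2 ^ i)) +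
            (∑ i ∈ Finset.range (2 * m),
              (b * x ^ (s2 * (2 ^ m - 1) + 1)) ^ (2 ^ i)) = 0
        then (1 : ℤ) else -1) ∈
      ({-2 ^ m, ((Nat.gcd (2 * s2 - 1) (2 ^ m + 1) : ℤ) - 1) * 2 ^ m,
        (2 * (Nat.gcd (2 * s2 - 1) (2 ^ m + 1) : ℤ) - 1) * 2 ^ m} : Set ℤ) := by
  have hcard : Fintype.card (GaloisField 2 (2 * m)) = 2 ^ (2 * m) := by
    rw [← Nat.card_eq_fintype_card, GaloisField.card 2 (2 * m) (by omega)]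
  obtain ⟨r, hr, hrQ⟩ := exists_sq_eq_of_pow_two_pow_eq_self hm ha
  obtain ⟨k, hk, hN⟩ := exists_card_filter_eq_zero_eq_gcd_mul hcard (2 * s2 - 1) (b := b)
    (r := r) fun h => hab ⟨by rw [← hr, h.1, zero_pow two_ne_zero], h.2⟩
  have hsum := sum_signOf_eq_card_sub_one_mul hm hcard hs2 hr hrQ (b := b)
  rw [hN] at hsum
  refine (congrArg (· ∈ _) hsum).mpr ?_
  simp only [Set.mem_insert_iff, Set.mem_singleton_iff]
  interval_cases k
  · exact Or.inl (by push_cast; ring)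
  · exact Or.inr (Or.inl (by push_cast; ring))
  · exact Or.inr (Or.inr (by push_cast; ring))

/-- for `q = 2^{2m}`, `d₂ = s₂(2^m-1)+1` with `s₂ ≢ 2⁻¹ (mod 2^m+1)`
(i.e. `2s₂ ≢ 1`), `l = gcd(2s₂-1, 2^m+1)`, `a ∈ F_{2^m}` and `b ∈ F_q` with
`(a,b) ≠ (0,0)`, the sum `S(a,b) = Σ_{x∈F_q} (-1)^{tr_m(a x^{2^m+1}) + Tr_n(b x^{d₂})}`
lies in `{-2^m, (l-1)·2^m, (2l-1)·2^m}`.  Traces are computed as `Σ_{i<m} y^{2^i}`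
resp. `Σ_{i<2m} y^{2^i}` with values in the prime field `{0,1} ⊆ F_q`. -/
theorem stmt_17 (m s2 : ℕ) (hm : 0 < m) (hs2 : 1 ≤ s2)
    (hs2' : ¬ 2 * s2 ≡ 1 [MOD 2 ^ m + 1])
    (a b : GaloisField 2 (2 * m)) (ha : a ^ (2 ^ m) = a)
    (hab : ¬ (a = 0 ∧ b = 0)) :
    (∑ x : GaloisField 2 (2 * m),
        if (∑ i ∈ Finset.range m, (a * x ^ (2 ^ m + 1)) ^ (2 ^ i)) +
            (∑ i ∈ Finset.range (2 * m),
              (b * x ^ (s2 * (2 ^ m - 1) + 1)) ^ (2 ^ i)) = 0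
        then (1 : ℤ) else -1) ∈
      ({-2 ^ m, ((Nat.gcd (2 * s2 - 1) (2 ^ m + 1) : ℤ) - 1) * 2 ^ m,
        (2 * (Nat.gcd (2 * s2 - 1) (2 ^ m + 1) : ℤ) - 1) * 2 ^ m} : Set ℤ) :=
  stmt_17_general m s2 hm hs2 a b ha hab
end

section
/- Let p be an odd prime, m ≥ 1, n = 2m, q = p^n. Let t ≡ 2 (mod 4), t not ≡ 0 (mod p^m + 1), s_1 = (t+2)/4, s_2 = (3t+2)/4, d_1 = s_1(p^m-1)+1, d_2 = s_2(p^m-1)+1, and l = gcd(t, p^m+1). For any (a,b) ≠ (0,0) in F_q^2, the number W(a,b) of u in S = {u : u * u^{p^m} = 1} satisfying b^{p^m} u^{3t/2} + a^{p^m} u^{t} + a u^{t/2} + b = 0 lies in the set {0, l/2, l, 3l/2}. -/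
/-!
Substituting `v = u ^ (t/2)` turns the equation into the cubic `b̄ v³ + ā v² + a v + b = 0`,
which is a nonzero polynomial because `(a, b) ≠ (0, 0)`, so it has at most three roots. On
`S = μ_{p^m+1}` the fibres of `u ↦ u ^ (t/2)` are cosets of `μ_g` with `g = gcd(t/2, p^m+1)`, and
`μ_g` has exactly `g` elements because `g ∣ p^{2m} - 1`. Hence `W(a,b) = k g` with `k ≤ 3`, and
`g = l/2` since `t/2` is odd and `p^m + 1` is even.
-/

open Polynomial Finset

section FiniteField

variable {K : Type*} [Field K] [Fintype K]

theorem FiniteField.card_nthRootsFinset_one_of_dvd {g : ℕ} (hg : g ∣ Fintype.card K - 1) :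
    #(nthRootsFinset g (1 : K)) = g := by
  classical
  obtain ⟨ζ, hζ⟩ := IsCyclic.exists_generator (α := Kˣ)
  have hprim : IsPrimitiveRoot (ζ : K) (Fintype.card K - 1) := by
    rw [← Fintype.card_units, ← Nat.card_eq_fintype_card,
      ← orderOf_eq_card_of_forall_mem_zpowers hζ]
    exact IsPrimitiveRoot.coe_units_iff.mpr (IsPrimitiveRoot.orderOf ζ)
  obtain ⟨k, hk⟩ := hg
  have hq : 0 < Fintype.card K - 1 := Nat.sub_pos_of_lt Fintype.one_lt_card
  exact (hprim.pow hq (hk.trans (mul_comm g k))).card_nthRootsFinset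

variable [DecidableEq K] {N s : ℕ}

theorem card_filter_pow_eq_one_and_pow_eq (hN : N ≠ 0) {u₀ : K} (hu₀ : u₀ ^ N = 1) :
    #{u | u ^ N = 1 ∧ u ^ s = u₀ ^ s} = #(nthRootsFinset (s.gcd N) (1 : K)) := by
  have hu₀0 : u₀ ≠ 0 := by rintro rfl; simp [zero_pow hN] at hu₀
  have hg : 0 < s.gcd N := Nat.gcd_pos_of_pos_right s (Nat.pos_of_ne_zero hN)
  symm
  refine card_nbij' (u₀ * ·) (u₀⁻¹ * ·) ?_ ?_ (fun z _ ↦ inv_mul_cancel_left₀ hu₀0 z)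
    (fun u _ ↦ mul_inv_cancel_left₀ hu₀0 u)
  · intro z hz
    rw [mem_coe, mem_nthRootsFinset hg, pow_gcd_eq_one] at hz
    simp [mul_pow, hu₀, hz.1, hz.2]
  · intro u hu
    simp only [mem_coe, mem_filter, mem_univ, true_and] at hu
    rw [mem_coe, mem_nthRootsFinset hg, pow_gcd_eq_one, mul_pow, mul_pow, inv_pow, inv_pow, hu.1,
      hu.2, hu₀, inv_mul_cancel₀ (pow_ne_zero s hu₀0)]
    simp

theorem exists_card_filter_pow_eq_one_and_eval_pow_eq_zero (f : K[X]) (hf : f ≠ 0) (hN : N ≠ 0) :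
    ∃ k ≤ #f.roots.toFinset,
      #{u | u ^ N = 1 ∧ f.eval (u ^ s) = 0} = k * #(nthRootsFinset (s.gcd N) (1 : K)) := by
  set T : Finset K := {u | u ^ N = 1 ∧ f.eval (u ^ s) = 0}
  refine ⟨#(T.image (· ^ s)), card_le_card fun v hv ↦ ?_, ?_⟩
  · obtain ⟨u, hu, rfl⟩ := mem_image.mp hv
    simp only [T, mem_filter, mem_univ, true_and] at hu
    simpa [hf] using hu.2
  · rw [card_eq_sum_card_image (· ^ s) T, ← smul_eq_mul, ← sum_const]
    refine sum_congr rfl fun v hv ↦ ?_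
    obtain ⟨u₀, hu₀, rfl⟩ := mem_image.mp hv
    simp only [T, mem_filter, mem_univ, true_and] at hu₀
    rw [← card_filter_pow_eq_one_and_pow_eq hN hu₀.1, filter_filter]
    exact congrArg card <| filter_congr fun u _ ↦
      ⟨fun h ↦ ⟨h.1.1, h.2⟩, fun h ↦ ⟨⟨h.1, h.2 ▸ hu₀.2⟩, h.2⟩⟩

end FiniteField

theorem Nat.gcd_two_mul_of_odd_of_even {s N : ℕ} (hs : Odd s) (hN : Even N) :
    Nat.gcd (2 * s) N = 2 * Nat.gcd s N := by
  obtain ⟨M, rfl⟩ := hN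
  rw [← two_mul, Nat.gcd_mul_left,
    Nat.Coprime.gcd_mul_left_cancel_right M (Nat.coprime_two_left.mpr hs)]

theorem stmt_19_general (p m t : ℕ) [Fact p.Prime] (hp : Odd p) (hm : 0 < m)
    (ht : t % 4 = 2)
    (a b : GaloisField p (2 * m)) (hab : ¬ (a = 0 ∧ b = 0)) :
    Nat.card {u : GaloisField p (2 * m) // u * u ^ (p ^ m) = 1 ∧
        b ^ (p ^ m) * u ^ (3 * t / 2) + a ^ (p ^ m) * u ^ t +
          a * u ^ (t / 2) + b = 0} ∈
      ({0, Nat.gcd t (p ^ m + 1) / 2, Nat.gcd t (p ^ m + 1),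
        3 * Nat.gcd t (p ^ m + 1) / 2} : Set ℕ) := by
  classical
  let _ := Fintype.ofFinite (GaloisField p (2 * m))
  obtain ⟨s, rfl, hs⟩ : ∃ s, t = 2 * s ∧ Odd s := ⟨t / 2, by omega, Nat.odd_iff.mpr (by omega)⟩
  let P : Cubic (GaloisField p (2 * m)) := ⟨b ^ p ^ m, a ^ p ^ m, a, b⟩
  have hP : P.toPoly ≠ 0 := by
    by_cases ha : a = 0
    · exact Cubic.ne_zero_of_a_ne_zero (pow_ne_zero _ fun hb ↦ hab ⟨ha, hb⟩)
    · exact Cubic.ne_zero_of_c_ne_zero ha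
  have hW : Nat.card {u : GaloisField p (2 * m) // u * u ^ (p ^ m) = 1 ∧
      b ^ (p ^ m) * u ^ (3 * (2 * s) / 2) + a ^ (p ^ m) * u ^ (2 * s) +
        a * u ^ (2 * s / 2) + b = 0} = #{u | u ^ (p ^ m + 1) = 1 ∧ P.toPoly.eval (u ^ s) = 0} := by
    rw [Nat.card_eq_fintype_card, Fintype.card_subtype]
    refine congrArg card (filter_congr fun u _ ↦ ?_)
    rw [pow_succ', show 3 * (2 * s) / 2 = s * 3 by omega, show 2 * s / 2 = s by omega,
      pow_mul u s 3, pow_mul' u 2 s]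
    simp [P, Cubic.toPoly]
  have hN : p ^ m + 1 ∣ Fintype.card (GaloisField p (2 * m)) - 1 :=
    ⟨p ^ m - 1, by
      rw [← Nat.card_eq_fintype_card, GaloisField.card p _ (by omega), pow_mul']
      simpa using Nat.sq_sub_sq (p ^ m) 1⟩
  obtain ⟨k, hk, hcard⟩ := exists_card_filter_pow_eq_one_and_eval_pow_eq_zero P.toPoly hP
    (N := p ^ m + 1) (s := s) (by omega)
  have hk3 : k ≤ 3 := hk.trans P.card_roots_le
  rw [hW, hcard, Nat.gcd_two_mul_of_odd_of_even hs hp.pow.add_one,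
    FiniteField.card_nthRootsFinset_one_of_dvd ((Nat.gcd_dvd_right _ _).trans hN)]
  interval_cases k <;> simp [Nat.mul_left_comm 3 2]

/-- `p` an odd prime, `q = p^{2m}`, `t ≡ 2 (mod 4)`, `t ≢ 0 (mod p^m+1)`,
`l = gcd(t, p^m+1)` (so `l` is even).  For `(a,b) ≠ (0,0)` in `F_q²`, the number
`W(a,b)` of `u ∈ S = {u : u·u^{p^m} = 1}` satisfying
`b̄ u^{3t/2} + ā u^t + a u^{t/2} + b = 0` (`x̄ = x^{p^m}`) lies in `{0, l/2, l, 3l/2}`. -/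
theorem stmt_19 (p m t : ℕ) [Fact p.Prime] (hp : Odd p) (hm : 0 < m)
    (ht : t % 4 = 2) (ht' : ¬ (p ^ m + 1) ∣ t)
    (a b : GaloisField p (2 * m)) (hab : ¬ (a = 0 ∧ b = 0)) :
    Nat.card {u : GaloisField p (2 * m) // u * u ^ (p ^ m) = 1 ∧
        b ^ (p ^ m) * u ^ (3 * t / 2) + a ^ (p ^ m) * u ^ t +
          a * u ^ (t / 2) + b = 0} ∈
      ({0, Nat.gcd t (p ^ m + 1) / 2, Nat.gcd t (p ^ m + 1),
        3 * Nat.gcd t (p ^ m + 1) / 2} : Set ℕ) :=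
  stmt_19_general p m t hp hm ht a b hab
end
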